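/- arXiv:1311.4609 — 10 statements merged into one kernel-verified Lean document; each statement's English description precedes it below -/
import Mathlib

section
/- Let M be a positive integer and let s, t : Fin M → ℝ be two tuples of real numbers, each nondecreasing (i ≤ j implies s(i) ≤ s(j) and t(i) ≤ t(j)). Then for every permutation σ of Fin M, ∑_{i} |s(i) − t(i)| ≤ ∑_{i} |s(i) − t(σ(i))|; that is, the identity permutation minimizes the matching cost on the line. -/
/-!
Exchanging the partners of two crossed pairs never increases the cost on the line: for
`a ≤ b` and `x ≤ y`, `|a - x| + |b - y| ≤ |a - y| + |b - x|` (the Monge property of the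
cost). Starting from any permutation, one such exchange moves the partner of the first
point to the first target without increasing the cost, and induction on the remaining
points finishes the argument.
-/

open Equiv

theorem Fintype.sum_comp_mul_swap {ι R : Type*} [Fintype ι] [DecidableEq ι] [AddCommGroup R]
    (f : ι → ι → R) (σ : Perm ι) {i j : ι} (hij : i ≠ j) :
    ∑ k, f k ((σ * swap i j) k) =
      ∑ k, f k (σ k) + (f i (σ j) + f j (σ i) - (f i (σ i) + f j (σ j))) := by
  have hdiff : ∑ k, (f k ((σ * swap i j) k) - f k (σ k)) =
      (f i (σ j) - f i (σ i)) + (f j (σ i) - f j (σ j)) := by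
    rw [Fintype.sum_eq_add i j hij fun k ⟨hki, hkj⟩ => by
      simp [swap_apply_of_ne_of_ne hki hkj]]
    simp
  rw [Finset.sum_sub_distrib] at hdiff
  rw [← sub_eq_iff_eq_add', hdiff]
  abel

variable {α β R : Type*} [Preorder α] [Preorder β]
  [AddCommGroup R] [PartialOrder R] [IsOrderedAddMonoid R]

def IsMonge (c : α → β → R) : Prop :=
  ∀ ⦃a b : α⦄, a ≤ b → ∀ ⦃x y : β⦄, x ≤ y → c a x + c b y ≤ c a y + c b x

theorem isMonge_abs_sub {K : Type*} [Field K] [LinearOrder K] [IsStrictOrderedRing K] :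
    IsMonge (fun a b : K => |a - b|) := by
  intro a b hab x y hxy
  rcases abs_cases (a - x) with ⟨h₁, h₁'⟩ | ⟨h₁, h₁'⟩ <;>
  rcases abs_cases (b - y) with ⟨h₂, h₂'⟩ | ⟨h₂, h₂'⟩ <;>
  rcases abs_cases (a - y) with ⟨h₃, h₃'⟩ | ⟨h₃, h₃'⟩ <;>
  rcases abs_cases (b - x) with ⟨h₄, h₄'⟩ | ⟨h₄, h₄'⟩ <;>
  simp only [h₁, h₂, h₃, h₄] <;> linarith

theorem IsMonge.sum_comp_mul_swap_le {n : ℕ} {c : α → β → R} (hc : IsMonge c)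
    {s : Fin n → α} (hs : Monotone s) (t : Fin n → β) (σ : Perm (Fin n)) {i j : Fin n}
    (hij : i ≤ j) (hσ : t (σ j) ≤ t (σ i)) :
    ∑ k, c (s k) (t ((σ * swap i j) k)) ≤ ∑ k, c (s k) (t (σ k)) := by
  rcases eq_or_ne i j with rfl | hne
  · simp
  rw [Fintype.sum_comp_mul_swap (fun k l => c (s k) (t l)) σ hne, add_le_iff_nonpos_right,
    sub_nonpos]
  exact hc (hs hij) hσ

theorem Equiv.Perm.exists_apply_succ_of_apply_zero {n : ℕ} {σ : Perm (Fin (n + 1))}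
    (hσ : σ 0 = 0) : ∃ τ : Perm (Fin n), ∀ i, σ i.succ = (τ i).succ := by
  obtain ⟨⟨p, τ⟩, rfl⟩ := Perm.decomposeFin.symm.surjective σ
  rw [Perm.decomposeFin_symm_apply_zero] at hσ
  subst hσ
  exact ⟨τ, fun i => by simp [Perm.decomposeFin_symm_apply_succ]⟩

theorem IsMonge.sum_le_sum_comp_perm {n : ℕ} {c : α → β → R} (hc : IsMonge c)
    {s : Fin n → α} {t : Fin n → β} (hs : Monotone s) (ht : Monotone t) (σ : Perm (Fin n)) :
    ∑ i, c (s i) (t i) ≤ ∑ i, c (s i) (t (σ i)) := by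
  induction n with
  | zero => simp
  | succ n ih =>
    set k := σ⁻¹ 0
    have hσk : σ k = 0 := σ.apply_symm_apply 0
    have hfix : (σ * swap 0 k) 0 = 0 := by simp [hσk]
    obtain ⟨τ, hτ⟩ := Perm.exists_apply_succ_of_apply_zero hfix
    have hsucc : Monotone (Fin.succ : Fin n → Fin (n + 1)) := Fin.strictMono_succ.monotone
    calc ∑ i, c (s i) (t i)
        = c (s 0) (t 0) + ∑ i : Fin n, c (s i.succ) (t i.succ) := Fin.sum_univ_succ _
      _ ≤ c (s 0) (t 0) + ∑ i : Fin n, c (s i.succ) (t (τ i).succ) :=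
        add_le_add_right (ih (hs.comp hsucc) (ht.comp hsucc) τ) _
      _ = ∑ i, c (s i) (t ((σ * swap 0 k) i)) := by
        simp only [Fin.sum_univ_succ, hfix, hτ]
      _ ≤ ∑ i, c (s i) (t (σ i)) :=
        hc.sum_comp_mul_swap_le hs t σ (Fin.zero_le k) (by rw [hσk]; exact ht (Fin.zero_le _))

theorem identity_matching_minimal_on_line_general (M : ℕ)
    (s t : Fin M → ℝ) (hs : Monotone s) (ht : Monotone t)
    (σ : Equiv.Perm (Fin M)) :
    ∑ i, |s i - t i| ≤ ∑ i, |s i - t (σ i)| :=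
  isMonge_abs_sub.sum_le_sum_comp_perm hs ht σ

/-- On the line, with both tuples sorted, the identity permutation minimizes the
matching cost `∑ i, |s i - t (σ i)|`. -/
theorem identity_matching_minimal_on_line (M : ℕ) (hM : 0 < M)
    (s t : Fin M → ℝ) (hs : Monotone s) (ht : Monotone t)
    (σ : Equiv.Perm (Fin M)) :
    ∑ i, |s i - t i| ≤ ∑ i, |s i - t (σ i)| :=
  identity_matching_minimal_on_line_general M s t hs ht σ
end

section
/- Let s, t : Fin M → ℝ and let σ be a permutation of Fin M that minimizes the matching cost ∑_{i} |s(i) − t(σ(i))| over all permutations. Then the matching determined by σ is unidirectional: for every y ∈ ℝ, there do not exist indices i and j with s(i) < y < t(σ(i)) and t(σ(j)) < y < s(j). In other words, no coordinate is simultaneously crossed by a forward match and a backward match. -/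
/-- Every minimal matching on the line is unidirectional: no coordinate `y` is
simultaneously crossed by a forward match and a backward match. -/
theorem minimal_matching_unidirectional (M : ℕ) (s t : Fin M → ℝ)
    (σ : Equiv.Perm (Fin M))
    (hmin : ∀ τ : Equiv.Perm (Fin M),
      ∑ i, |s i - t (σ i)| ≤ ∑ i, |s i - t (τ i)|) :
    ∀ y : ℝ, ¬ ∃ i j : Fin M,
      (s i < y ∧ y < t (σ i)) ∧ (t (σ j) < y ∧ y < s j) := by
  rintro y ⟨i, j, ⟨h1, h2⟩, ⟨h3, h4⟩⟩
  have hij : i ≠ j := by rintro rfl; linarith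
  set τ : Equiv.Perm (Fin M) := σ * Equiv.swap i j with hτ
  have key : ∑ k, |s k - t (τ k)| < ∑ k, |s k - t (σ k)| := by
    have hsub : ({i, j} : Finset (Fin M)) ⊆ Finset.univ := Finset.subset_univ _
    rw [← Finset.sum_sdiff hsub, ← Finset.sum_sdiff hsub]
    have heq : ∑ k ∈ Finset.univ \ {i, j}, |s k - t (τ k)|
        = ∑ k ∈ Finset.univ \ {i, j}, |s k - t (σ k)| := by
      apply Finset.sum_congr rfl
      intro k hk
      simp only [Finset.mem_sdiff, Finset.mem_insert, Finset.mem_singleton] at hk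
      push_neg at hk
      have : τ k = σ k := by
        simp [hτ, Equiv.swap_apply_of_ne_of_ne hk.2.1 hk.2.2]
      rw [this]
    rw [heq]
    have hpair : ∀ f : Fin M → ℝ, ∑ k ∈ ({i,j} : Finset (Fin M)), f k = f i + f j :=
      fun f => Finset.sum_pair hij
    rw [hpair, hpair]
    have hti : τ i = σ j := by simp [hτ]
    have htj : τ j = σ i := by simp [hτ]
    rw [hti, htj]
    rcases abs_cases (s i - t (σ j)) with ⟨e1, _⟩ | ⟨e1, _⟩ <;>
    rcases abs_cases (s j - t (σ i)) with ⟨e2, _⟩ | ⟨e2, _⟩ <;>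
    rw [abs_of_neg (by linarith : s i - t (σ i) < 0),
        abs_of_pos (by linarith : (0:ℝ) < s j - t (σ j))] <;>
    linarith
  exact absurd (hmin τ) (not_le.mpr key)
end

section
/- Let s, t : Fin M → ℝ and let σ be a permutation of Fin M whose matching is unidirectional, i.e., for every y ∈ ℝ there do not exist i, j with s(i) < y < t(σ(i)) and t(σ(j)) < y < s(j). Then the matching cost equals the integral of |F|: ∑_{i} |s(i) − t(σ(i))| = ∫_ℝ |F(y)| dy. -/
/-!
Write `F = ∑ᵢ gᵢ` with `gᵢ(y) = 𝟙[s i < y] - 𝟙[t (σ i) < y]`; `|gᵢ|` is the indicator of the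
interval between `s i` and `t (σ i)`, so `∫ |gᵢ| = |s i - t (σ i)|`. Unidirectionality forbids
two `gᵢ(y)` of opposite signs (such a conflict at `y` would persist, with strict inequalities,
slightly left of `y`), hence `|F| = ∑ᵢ |gᵢ|` pointwise.
-/

open Finset MeasureTheory

theorem Finset.abs_sum_eq_sum_abs_of_no_opposite_signs {ι G : Type*} [AddCommGroup G]
    [LinearOrder G] [IsOrderedAddMonoid G] {s : Finset ι} {f : ι → G}
    (h : ∀ i ∈ s, ∀ j ∈ s, 0 < f i → 0 ≤ f j) :
    |∑ i ∈ s, f i| = ∑ i ∈ s, |f i| := by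
  by_cases hpos : ∃ i ∈ s, 0 < f i
  · obtain ⟨i, hi, hfi⟩ := hpos
    have hnonneg : ∀ j ∈ s, 0 ≤ f j := fun j hj => h i hi j hj hfi
    rw [abs_sum_of_nonneg hnonneg]
    exact sum_congr rfl fun j hj => (abs_of_nonneg (hnonneg j hj)).symm
  · simp only [not_exists, not_and, not_lt] at hpos
    rw [← abs_neg, ← sum_neg_distrib, abs_sum_of_nonneg fun j hj => neg_nonneg.2 (hpos j hj)]
    exact sum_congr rfl fun j hj => (abs_of_nonpos (hpos j hj)).symm

namespace Matching

/-- The contribution of the pair `(a, b)` to `F` at `y`. -/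
noncomputable def stepDiff (a b y : ℝ) : ℝ :=
  (if a < y then 1 else 0) - (if b < y then 1 else 0)

lemma abs_stepDiff (a b : ℝ) :
    (fun y => |stepDiff a b y|) = (Set.Ioc (min a b) (max a b)).indicator 1 := by
  funext y
  by_cases ha : a < y <;> by_cases hb : b < y <;>
    simp [stepDiff, Set.indicator, ha, hb, not_lt.1]

lemma integrable_abs_stepDiff (a b : ℝ) : Integrable fun y => |stepDiff a b y| := by
  rw [abs_stepDiff]
  exact (integrable_indicator_iff measurableSet_Ioc).2 (integrableOn_const measure_Ioc_lt_top.ne)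

lemma integral_abs_stepDiff (a b : ℝ) : ∫ y, |stepDiff a b y| = |a - b| := by
  rw [abs_stepDiff, integral_indicator_one measurableSet_Ioc, Real.volume_real_Ioc_of_le min_le_max,
    max_sub_min_eq_abs, abs_sub_comm]

lemma stepDiff_pos_iff {a b y : ℝ} : 0 < stepDiff a b y ↔ a < y ∧ y ≤ b := by
  by_cases ha : a < y <;> by_cases hb : b < y <;> simp [stepDiff, ha, hb, not_lt.1]

lemma stepDiff_neg_iff {a b y : ℝ} : stepDiff a b y < 0 ↔ b < y ∧ y ≤ a := by
  by_cases ha : a < y <;> by_cases hb : b < y <;> simp [stepDiff, ha, hb, not_lt.1]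

lemma exists_strict_of_stepDiff_pos_of_neg {a b a' b' y : ℝ}
    (hpos : 0 < stepDiff a b y) (hneg : stepDiff a' b' y < 0) :
    ∃ z, (a < z ∧ z < b) ∧ (b' < z ∧ z < a') := by
  obtain ⟨hay, hyb⟩ := stepDiff_pos_iff.1 hpos
  obtain ⟨hb'y, hya'⟩ := stepDiff_neg_iff.1 hneg
  refine ⟨(max a b' + y) / 2, ⟨?_, ?_⟩, ?_, ?_⟩ <;>
    linarith [le_max_left a b', le_max_right a b', max_lt hay hb'y]

variable {ι : Type*} [Fintype ι] (a b : ι → ℝ)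

lemma abs_sum_stepDiff (huni : ∀ y : ℝ, ¬ ∃ i j : ι, (a i < y ∧ y < b i) ∧ (b j < y ∧ y < a j))
    (y : ℝ) : |∑ i, stepDiff (a i) (b i) y| = ∑ i, |stepDiff (a i) (b i) y| := by
  refine abs_sum_eq_sum_abs_of_no_opposite_signs fun i _ j _ hi => not_lt.1 fun hj => ?_
  obtain ⟨z, hz⟩ := exists_strict_of_stepDiff_pos_of_neg hi hj
  exact huni z ⟨i, j, hz⟩

lemma integral_abs_sum_stepDiff
    (huni : ∀ y : ℝ, ¬ ∃ i j : ι, (a i < y ∧ y < b i) ∧ (b j < y ∧ y < a j)) :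
    ∫ y, |∑ i, stepDiff (a i) (b i) y| = ∑ i, |a i - b i| := by
  simp_rw [abs_sum_stepDiff a b huni, ← integral_abs_stepDiff]
  exact integral_finsetSum univ fun i _ => integrable_abs_stepDiff (a i) (b i)

lemma card_filter_sub_card_filter_eq_sum_stepDiff (e : Equiv.Perm ι) (y : ℝ) :
    (((univ.filter fun i => a i < y).card : ℤ) - ((univ.filter fun i => b i < y).card : ℤ) : ℝ) =
      ∑ i, stepDiff (a i) (b (e i)) y := by
  simp only [stepDiff, sum_sub_distrib, Equiv.sum_comp e fun i => if b i < y then (1 : ℝ) else 0]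
  push_cast [natCast_card_filter]
  rfl

end Matching

open Matching in
/-- If the matching determined by `σ` is unidirectional, then its cost equals the
integral over `ℝ` of `|F|`, where `F(y) = #{i | s i < y} - #{i | t i < y}`. -/
theorem unidirectional_cost_eq_integral (M : ℕ) (s t : Fin M → ℝ)
    (σ : Equiv.Perm (Fin M))
    (huni : ∀ y : ℝ, ¬ ∃ i j : Fin M,
      (s i < y ∧ y < t (σ i)) ∧ (t (σ j) < y ∧ y < s j)) :
    ∑ i, |s i - t (σ i)| =
      ∫ y : ℝ, |(((univ.filter fun i => s i < y).card : ℤ)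
        - ((univ.filter fun i => t i < y).card : ℤ) : ℝ)| := by
  simp_rw [card_filter_sub_card_filter_eq_sum_stepDiff s t σ]
  exact (integral_abs_sum_stepDiff s (t ∘ σ) huni).symm
end

section
/- Let s, t : Fin M → ℝ. For every permutation σ of Fin M, the matching cost is bounded below by the integral of |F|: ∑_{i} |s(i) − t(σ(i))| ≥ ∫_ℝ |F(y)| dy. -/
/-!
Pairing `s i` with `t (σ i)` writes `F y` as `∑ i, (1[s i < y] - 1[t (σ i) < y])`. The `i`-th
summand has absolute value the indicator of the interval between `s i` and `t (σ i)`, whose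
integral is `|s i - t (σ i)|`; the triangle inequality under the integral gives the bound.
-/

open Finset MeasureTheory
open scoped symmDiff

theorem Set.Ioi_symmDiff_Ioi {α : Type*} [LinearOrder α] (a b : α) :
    Set.Ioi a ∆ Set.Ioi b = Set.uIoc a b := by
  ext y
  simp only [Set.mem_symmDiff, Set.mem_Ioi, Set.mem_uIoc, not_lt]

theorem abs_indicator_Ioi_sub_indicator_Ioi {α : Type*} [LinearOrder α] (a b y : α) :
    |(Set.Ioi a).indicator (1 : α → ℝ) y - (Set.Ioi b).indicator 1 y| =
      (Set.uIoc a b).indicator 1 y := by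
  rw [← Set.abs_indicator_symmDiff, Set.Ioi_symmDiff_Ioi, abs_of_nonneg]
  exact Set.indicator_nonneg (fun _ _ => zero_le_one) y

theorem integrable_indicator_uIoc_one (a b : ℝ) :
    Integrable ((Set.uIoc a b).indicator (1 : ℝ → ℝ)) :=
  (integrable_indicator_iff measurableSet_uIoc).2
    (integrableOn_const (Real.volume_uIoc ▸ ENNReal.ofReal_ne_top))

theorem integral_indicator_uIoc_one (a b : ℝ) :
    ∫ y, (Set.uIoc a b).indicator (1 : ℝ → ℝ) y = |a - b| := by
  rw [integral_indicator_one measurableSet_uIoc, measureReal_def, Real.volume_uIoc,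
    ENNReal.toReal_ofReal (abs_nonneg _), abs_sub_comm]

theorem card_filter_lt_eq_sum_indicator_Ioi {ι α : Type*} [Fintype ι] [LinearOrder α]
    (a : ι → α) (y : α) :
    ((univ.filter fun i => a i < y).card : ℝ) = ∑ i, (Set.Ioi (a i)).indicator 1 y := by
  simp only [Set.indicator_apply, Set.mem_Ioi, Pi.one_apply, sum_boole]

theorem integral_abs_sum_indicator_Ioi_sub_le {ι : Type*} [Fintype ι] (a b : ι → ℝ) :
    ∫ y, |∑ i, ((Set.Ioi (a i)).indicator (1 : ℝ → ℝ) y - (Set.Ioi (b i)).indicator 1 y)| ≤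
      ∑ i, |a i - b i| := by
  calc ∫ y, |∑ i, ((Set.Ioi (a i)).indicator (1 : ℝ → ℝ) y - (Set.Ioi (b i)).indicator 1 y)|
      ≤ ∫ y, ∑ i, (Set.uIoc (a i) (b i)).indicator (1 : ℝ → ℝ) y := by
        refine integral_mono_of_nonneg (.of_forall fun y => abs_nonneg _)
          (integrable_finsetSum _ fun i _ => integrable_indicator_uIoc_one _ _)
          (.of_forall fun y => ?_)
        refine (abs_sum_le_sum_abs _ _).trans_eq (sum_congr rfl fun i _ => ?_)
        exact abs_indicator_Ioi_sub_indicator_Ioi _ _ y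
    _ = ∑ i, |a i - b i| := by
        rw [integral_finsetSum _ fun i _ => integrable_indicator_uIoc_one _ _]
        exact sum_congr rfl fun i _ => integral_indicator_uIoc_one _ _

/-- For every permutation `σ`, the matching cost on the line is bounded below by the
integral over `ℝ` of `|F|`, where `F(y) = #{i | s i < y} - #{i | t i < y}`. -/
theorem matching_cost_ge_integral (M : ℕ) (s t : Fin M → ℝ)
    (σ : Equiv.Perm (Fin M)) :
    ∑ i, |s i - t (σ i)| ≥
      ∫ y : ℝ, |(((univ.filter fun i => s i < y).card : ℤ)
        - ((univ.filter fun i => t i < y).card : ℤ) : ℝ)| := by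
  have hcount (y : ℝ) : (((univ.filter fun i => s i < y).card : ℤ)
        - ((univ.filter fun i => t i < y).card : ℤ) : ℝ) =
      ∑ i, ((Set.Ioi (s i)).indicator (1 : ℝ → ℝ) y - (Set.Ioi (t (σ i))).indicator 1 y) := by
    push_cast
    rw [card_filter_lt_eq_sum_indicator_Ioi, card_filter_lt_eq_sum_indicator_Ioi, sum_sub_distrib,
      Equiv.sum_comp σ fun i => (Set.Ioi (t i)).indicator 1 y]
  simp_rw [hcount]
  exact integral_abs_sum_indicator_Ioi_sub_le s (t ∘ σ)
end

section
/- Let s, t : Fin M → ℝ with M ≥ 1. Then the minimum over all permutations σ of Fin M of the matching cost ∑_{i} |s(i) − t(σ(i))| equals ∫_ℝ |F(y)| dy; that is, the cost of a minimal bipartite matching on the line can be computed without producing a matching, as the integral of |F|. -/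
open Finset MeasureTheory

/-!
Write `F = ∑ᵢ (𝟙_{s i < y} - 𝟙_{t σ(i) < y})`; this holds for every permutation `σ`, and each
summand is `±` the indicator of the interval between `s i` and `t σ(i)`, whose integral in
absolute value is `|s i - t σ(i)|`. The triangle inequality gives `∫ |F| ≤ cost σ` for all `σ`.
For the monotone matching (the `k`-th smallest `s` to the `k`-th smallest `t`) the summands at
any fixed `y` all have the same sign, so the triangle inequality is an equality.
-/

noncomputable def stepDiff (a b y : ℝ) : ℝ :=
  (if a < y then 1 else 0) - (if b < y then 1 else 0)

lemma stepDiff_eq_indicator (a b : ℝ) :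
    stepDiff a b = (Set.Ioc (min a b) (max a b)).indicator fun _ => if a ≤ b then 1 else -1 := by
  funext y
  unfold stepDiff Set.indicator
  grind

lemma abs_stepDiff (a b y : ℝ) :
    |stepDiff a b y| = (Set.Ioc (min a b) (max a b)).indicator 1 y := by
  rw [stepDiff_eq_indicator]
  simp [Set.indicator, apply_ite abs]

lemma integrable_stepDiff (a b : ℝ) : Integrable (stepDiff a b) := by
  rw [stepDiff_eq_indicator, integrable_indicator_iff measurableSet_Ioc]
  exact integrableOn_const measure_Ioc_lt_top.ne

lemma integral_abs_stepDiff (a b : ℝ) : ∫ y, |stepDiff a b y| = |a - b| := by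
  simp only [abs_stepDiff]
  rw [integral_indicator_one measurableSet_Ioc, Real.volume_real_Ioc_of_le min_le_max,
    max_sub_min_eq_abs']

section

variable {ι : Type*} [Fintype ι]

lemma sum_stepDiff_eq_card_sub_card (s t : ι → ℝ) (y : ℝ) :
    ∑ i, stepDiff (s i) (t i) y =
      (((univ.filter fun i => s i < y).card : ℤ)
        - ((univ.filter fun i => t i < y).card : ℤ) : ℝ) := by
  simp only [stepDiff, sum_sub_distrib, sum_boole]
  push_cast
  rfl

lemma sum_stepDiff_comp_perm (s t : ι → ℝ) (e f : Equiv.Perm ι) (y : ℝ) :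
    ∑ i, stepDiff (s (e i)) (t (f i)) y = ∑ i, stepDiff (s i) (t i) y := by
  simp only [stepDiff, sum_sub_distrib]
  rw [Equiv.sum_comp e (fun i => if s i < y then (1 : ℝ) else 0),
    Equiv.sum_comp f (fun i => if t i < y then (1 : ℝ) else 0)]

lemma integral_sum_abs_stepDiff (a b : ι → ℝ) :
    ∫ y, ∑ i, |stepDiff (a i) (b i) y| = ∑ i, |a i - b i| := by
  rw [integral_finsetSum _ fun i _ => (integrable_stepDiff _ _).abs]
  exact sum_congr rfl fun i _ => integral_abs_stepDiff _ _

lemma integral_abs_sum_stepDiff_le (a b : ι → ℝ) :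
    ∫ y, |∑ i, stepDiff (a i) (b i) y| ≤ ∑ i, |a i - b i| := by
  rw [← integral_sum_abs_stepDiff]
  exact integral_mono (integrable_finsetSum _ fun i _ => integrable_stepDiff _ _).abs
    (integrable_finsetSum _ fun i _ => (integrable_stepDiff _ _).abs)
    fun y => abs_sum_le_sum_abs _ _

/-- If `a i < y ≤ b i` and `b j < y ≤ a j`, then `i` and `j` are in opposite orders for `a` and
`b`, which monotonicity forbids. -/
lemma abs_sum_stepDiff_of_monotone [LinearOrder ι] {a b : ι → ℝ} (ha : Monotone a)
    (hb : Monotone b) (y : ℝ) :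
    |∑ i, stepDiff (a i) (b i) y| = ∑ i, |stepDiff (a i) (b i) y| := by
  have same_sign : (∀ i, 0 ≤ stepDiff (a i) (b i) y) ∨ ∀ i, stepDiff (a i) (b i) y ≤ 0 := by
    by_contra! h
    obtain ⟨⟨i, hi⟩, ⟨j, hj⟩⟩ := h
    unfold stepDiff at hi hj
    split_ifs at hi hj <;> try linarith
    rcases le_total i j with hij | hij
    · linarith [ha hij]
    · linarith [hb hij]
  rcases same_sign with h | h
  · rw [abs_of_nonneg (sum_nonneg fun i _ => h i)]
    exact sum_congr rfl fun i _ => (abs_of_nonneg (h i)).symm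
  · rw [abs_of_nonpos (sum_nonpos fun i _ => h i), ← sum_neg_distrib]
    exact sum_congr rfl fun i _ => (abs_of_nonpos (h i)).symm

lemma integral_abs_sum_stepDiff_of_monotone [LinearOrder ι] {a b : ι → ℝ} (ha : Monotone a)
    (hb : Monotone b) : ∫ y, |∑ i, stepDiff (a i) (b i) y| = ∑ i, |a i - b i| := by
  simp only [abs_sum_stepDiff_of_monotone ha hb]
  exact integral_sum_abs_stepDiff a b

end

theorem min_matching_cost_eq_integral_general (M : ℕ) (s t : Fin M → ℝ) :
    (⨅ σ : Equiv.Perm (Fin M), ∑ i, |s i - t (σ i)|) =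
      ∫ y : ℝ, |(((univ.filter fun i => s i < y).card : ℤ)
        - ((univ.filter fun i => t i < y).card : ℤ) : ℝ)| := by
  simp only [← sum_stepDiff_eq_card_sub_card]
  apply le_antisymm
  · set πs := Tuple.sort s
    set πt := Tuple.sort t
    have sorted_cost : ∑ i, |s i - t ((πs.symm.trans πt) i)| = ∑ j, |s (πs j) - t (πt j)| := by
      rw [← Equiv.sum_comp πs]
      simp
    calc (⨅ σ : Equiv.Perm (Fin M), ∑ i, |s i - t (σ i)|)
        ≤ ∑ i, |s i - t ((πs.symm.trans πt) i)| := ciInf_le (Set.finite_range _).bddBelow _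
      _ = ∫ y, |∑ j, stepDiff (s (πs j)) (t (πt j)) y| := by
        rw [sorted_cost]
        exact (integral_abs_sum_stepDiff_of_monotone (Tuple.monotone_sort s)
          (Tuple.monotone_sort t)).symm
      _ = ∫ y, |∑ i, stepDiff (s i) (t i) y| := by simp only [sum_stepDiff_comp_perm]
  · refine le_ciInf fun σ => ?_
    have reindex := sum_stepDiff_comp_perm s t 1 σ
    simp only [Equiv.Perm.coe_one, id] at reindex
    simp only [← reindex]
    exact integral_abs_sum_stepDiff_le s fun i => t (σ i)

/-- The minimal bipartite matching cost on the line equals the integral over `ℝ` of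
`|F|`, where `F(y) = #{i | s i < y} - #{i | t i < y}`. -/
theorem min_matching_cost_eq_integral (M : ℕ) (hM : 1 ≤ M) (s t : Fin M → ℝ) :
    (⨅ σ : Equiv.Perm (Fin M), ∑ i, |s i - t (σ i)|) =
      ∫ y : ℝ, |(((univ.filter fun i => s i < y).card : ℤ)
        - ((univ.filter fun i => t i < y).card : ℤ) : ℝ)| :=
  min_matching_cost_eq_integral_general M s t
end

section
/- Let L > 0, let M be a positive integer, and let s, t : Fin M → ℝ be tuples of points in [0, L]. Define F : ℝ → ℤ by F(y) = (#{i | s(i) < y} : ℤ) − (#{i | t(i) < y} : ℤ) and C : ℝ → ℝ by C(z) = ∫_{0}^{L} |F(y) + z| dy. Then C is piecewise affine with at most 2M + 2 linear pieces: there exist integers z₁ < z₂ < ⋯ < z_m with m ≤ 2M + 1 such that C is affine on (−∞, z₁], affine on [z_k, z_{k+1}] for each k < m, and affine on [z_m, ∞). -/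
open Finset MeasureTheory

/-!
For fixed `y`, the integrand `x ↦ |F y + x|` is affine on every interval on which `F y + x` keeps
its sign. Since `F` takes integer values in `[-M, M]`, this holds for all `y` at once on
`(-∞, -M]`, on `[M, ∞)` and on each `[n, n + 1]` with `n ∈ ℤ`; integrating in `y` preserves
affineness, so the integers `-M, …, M` serve as breakpoints.
-/

section CountBelow

variable {ι : Type*} [Fintype ι] (u v : ι → ℝ)

theorem monotone_card_filter_lt : Monotone fun y => (univ.filter fun i => u i < y).card :=
  fun _ _ hyy' => card_le_card <| monotone_filter_right _ fun _ _ hi => hi.trans_le hyy'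

theorem intervalIntegrable_card_filter_lt_sub (a b : ℝ) :
    IntervalIntegrable (fun y => ((((univ.filter fun i => u i < y).card : ℤ)
      - ((univ.filter fun i => v i < y).card : ℤ) : ℤ) : ℝ)) volume a b := by
  simp only [Int.cast_sub, Int.cast_natCast]
  exact (Nat.mono_cast.comp (monotone_card_filter_lt u)).intervalIntegrable.sub
    (Nat.mono_cast.comp (monotone_card_filter_lt v)).intervalIntegrable

theorem abs_card_filter_lt_sub_le (y : ℝ) :
    |((((univ.filter fun i => u i < y).card : ℤ)
      - ((univ.filter fun i => v i < y).card : ℤ) : ℤ) : ℝ)| ≤ Fintype.card ι := by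
  simp only [Int.cast_sub, Int.cast_natCast]
  exact abs_sub_le_of_nonneg_of_le (Nat.cast_nonneg _) (mod_cast card_le_univ _)
    (Nat.cast_nonneg _) (mod_cast card_le_univ _)

end CountBelow

theorem abs_intCast_add_of_mem_Icc (j n : ℤ) {x : ℝ} (hx : x ∈ Set.Icc (n : ℝ) (n + 1)) :
    |(j : ℝ) + x| = |(j : ℝ) + n| + (x - n) * (|(j : ℝ) + n + 1| - |(j : ℝ) + n|) := by
  rcases le_or_gt 0 (j + n) with h | h
  · have h' : (0 : ℝ) ≤ j + n := by exact_mod_cast h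
    rw [abs_of_nonneg (by linarith [hx.1]), abs_of_nonneg h', abs_of_nonneg (by linarith)]
    ring
  · have h' : (j : ℝ) + n + 1 ≤ 0 := by exact_mod_cast (show j + n + 1 ≤ 0 by omega)
    rw [abs_of_nonpos (by linarith [hx.2]), abs_of_nonpos (by linarith), abs_of_nonpos h']
    ring

section IntegralAbsAdd

variable {a b : ℝ}

theorem exists_intervalIntegral_eq_affine {S : Set ℝ} {f : ℝ → ℝ → ℝ}
    {α β : ℝ → ℝ} (hα : IntervalIntegrable α volume a b)
    (hβ : IntervalIntegrable β volume a b)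
    (hf : ∀ x ∈ S, ∀ y, f x y = α y + β y * x) :
    ∃ c d : ℝ, ∀ x ∈ S, ∫ y in a..b, f x y = c + d * x := by
  refine ⟨∫ y in a..b, α y, ∫ y in a..b, β y, fun x hx => ?_⟩
  simp_rw [hf x hx]
  rw [intervalIntegral.integral_add hα (hβ.mul_const x), intervalIntegral.integral_mul_const]

theorem exists_integral_abs_add_eq_affine_Iic {φ : ℝ → ℝ}
    (hφ : IntervalIntegrable φ volume a b) {N : ℝ} (hN : ∀ y, φ y ≤ N) :
    ∃ c d : ℝ, ∀ x ∈ Set.Iic (-N), ∫ y in a..b, |φ y + x| = c + d * x :=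
  exists_intervalIntegral_eq_affine hφ.neg (intervalIntegrable_const (c := -1)) fun x hx y => by
    rw [abs_of_nonpos (by linarith [hN y, Set.mem_Iic.1 hx]), Pi.neg_apply]
    ring

theorem exists_integral_abs_add_eq_affine_Ici {φ : ℝ → ℝ}
    (hφ : IntervalIntegrable φ volume a b) {N : ℝ} (hN : ∀ y, -N ≤ φ y) :
    ∃ c d : ℝ, ∀ x ∈ Set.Ici N, ∫ y in a..b, |φ y + x| = c + d * x :=
  exists_intervalIntegral_eq_affine hφ (intervalIntegrable_const (c := 1)) fun x hx y => by
    rw [abs_of_nonneg (by linarith [hN y, Set.mem_Ici.1 hx])]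
    ring

theorem exists_integral_abs_intCast_add_eq_affine_Icc {φ : ℝ → ℤ}
    (hφ : IntervalIntegrable (fun y => (φ y : ℝ)) volume a b) (n : ℤ) :
    ∃ c d : ℝ, ∀ x ∈ Set.Icc (n : ℝ) (n + 1),
      ∫ y in a..b, |(φ y : ℝ) + x| = c + d * x := by
  have habs : ∀ r : ℝ, IntervalIntegrable (fun y => |(φ y : ℝ) + r|) volume a b :=
    fun _ => (hφ.add intervalIntegrable_const).abs
  refine exists_intervalIntegral_eq_affine
    ((habs n).sub (((habs (n + 1)).sub (habs n)).const_mul (n : ℝ)))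
    ((habs (n + 1)).sub (habs n)) fun x hx y => ?_
  simp only [← add_assoc]
  rw [abs_intCast_add_of_mem_Icc (φ y) n hx]
  ring

end IntegralAbsAdd

theorem road_cost_piecewise_affine_general (L : ℝ) (M : ℕ) (s t : Fin M → ℝ) :
    ∃ (m : ℕ) (z : Fin (m + 1) → ℤ),
      m + 1 ≤ 2 * M + 1 ∧ StrictMono z ∧
      (∃ α β : ℝ, ∀ x ∈ Set.Iic ((z 0 : ℝ)),
        (∫ y in (0:ℝ)..L, |((((univ.filter fun i => s i < y).card : ℤ)
          - ((univ.filter fun i => t i < y).card : ℤ) : ℤ) : ℝ) + x|) = α + β * x) ∧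
      (∀ k : Fin m, ∃ α β : ℝ,
        ∀ x ∈ Set.Icc ((z k.castSucc : ℝ)) ((z k.succ : ℝ)),
        (∫ y in (0:ℝ)..L, |((((univ.filter fun i => s i < y).card : ℤ)
          - ((univ.filter fun i => t i < y).card : ℤ) : ℤ) : ℝ) + x|) = α + β * x) ∧
      (∃ α β : ℝ, ∀ x ∈ Set.Ici ((z (Fin.last m) : ℝ)),
        (∫ y in (0:ℝ)..L, |((((univ.filter fun i => s i < y).card : ℤ)
          - ((univ.filter fun i => t i < y).card : ℤ) : ℤ) : ℝ) + x|) = α + β * x) := by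
  set F : ℝ → ℤ := fun y => ((univ.filter fun i => s i < y).card : ℤ)
    - ((univ.filter fun i => t i < y).card : ℤ)
  have hF : IntervalIntegrable (fun y => (F y : ℝ)) volume 0 L :=
    intervalIntegrable_card_filter_lt_sub s t 0 L
  have hFbound (y : ℝ) : |(F y : ℝ)| ≤ M :=
    (abs_card_filter_lt_sub_le s t y).trans_eq (by rw [Fintype.card_fin])
  refine ⟨2 * M, fun j => (j : ℤ) - M, le_rfl, fun i j hij => ?_, ?_, fun k => ?_, ?_⟩
  · exact sub_lt_sub_right (by exact_mod_cast hij) _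
  · obtain ⟨c, d, h⟩ :=
      exists_integral_abs_add_eq_affine_Iic hF fun y => (abs_le.1 (hFbound y)).2
    exact ⟨c, d, fun x hx => h x (by simpa using hx)⟩
  · obtain ⟨c, d, h⟩ := exists_integral_abs_intCast_add_eq_affine_Icc hF ((k : ℤ) - M)
    refine ⟨c, d, fun x hx => h x ?_⟩
    simp only [Fin.val_castSucc, Fin.val_succ] at hx
    push_cast at hx ⊢
    constructor <;> linarith [hx.1, hx.2]
  · obtain ⟨c, d, h⟩ :=
      exists_integral_abs_add_eq_affine_Ici hF fun y => (abs_le.1 (hFbound y)).1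
    refine ⟨c, d, fun x hx => h x ?_⟩
    simp only [Fin.val_last, Set.mem_Ici] at hx ⊢
    push_cast at hx
    linarith

/-- For a road of length `L` carrying `2M` points, the cost function
`C(z) = ∫_0^L |F(y) + z| dy` is piecewise affine with at most `2M + 2` linear pieces:
there exist integer breakpoints `z₁ < ⋯ < z_m` with `m ≤ 2M + 1` such that `C` is
affine on `(-∞, z₁]`, on each `[z_k, z_{k+1}]`, and on `[z_m, ∞)`. -/
theorem road_cost_piecewise_affine (L : ℝ) (hL : 0 < L) (M : ℕ) (hM : 0 < M)
    (s t : Fin M → ℝ) (hs : ∀ i, s i ∈ Set.Icc 0 L) (ht : ∀ i, t i ∈ Set.Icc 0 L) :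
    ∃ (m : ℕ) (z : Fin (m + 1) → ℤ),
      m + 1 ≤ 2 * M + 1 ∧ StrictMono z ∧
      (∃ α β : ℝ, ∀ x ∈ Set.Iic ((z 0 : ℝ)),
        (∫ y in (0:ℝ)..L, |((((univ.filter fun i => s i < y).card : ℤ)
          - ((univ.filter fun i => t i < y).card : ℤ) : ℤ) : ℝ) + x|) = α + β * x) ∧
      (∀ k : Fin m, ∃ α β : ℝ,
        ∀ x ∈ Set.Icc ((z k.castSucc : ℝ)) ((z k.succ : ℝ)),
        (∫ y in (0:ℝ)..L, |((((univ.filter fun i => s i < y).card : ℤ)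
          - ((univ.filter fun i => t i < y).card : ℤ) : ℤ) : ℝ) + x|) = α + β * x) ∧
      (∃ α β : ℝ, ∀ x ∈ Set.Ici ((z (Fin.last m) : ℝ)),
        (∫ y in (0:ℝ)..L, |((((univ.filter fun i => s i < y).card : ℤ)
          - ((univ.filter fun i => t i < y).card : ℤ) : ℤ) : ℝ) + x|) = α + β * x) :=
  road_cost_piecewise_affine_general L M s t
end

section
/- Let s, t : Fin M → ℝ be tuples of points in [0, 2π), and let d(x₁, x₂) = min(|x₁ − x₂|, 2π − |x₁ − x₂|) be the circle distance. For every permutation σ of Fin M, the circle matching cost satisfies ∑_{i} d(s(i), t(σ(i))) ≥ min_{z ∈ ℤ} ∫_{0}^{2π} |F(y) + z| dy (the minimum over integers z exists since the integral tends to ∞ as |z| → ∞). -/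
/-!
Write `𝟙[a < y]` for the indicator of `a < y`. Since `σ` is a bijection,
`F(y) = ∑ᵢ (𝟙[sᵢ < y] - 𝟙[t_{σ i} < y])`, a sum of one step function per matched pair.
For a single pair `(a, b)` the step function is `±1` on the arc between `a` and `b` and `0`
elsewhere, so adding `c = 0` or `c = ∓1` makes `∫₀^{2π} |step + c|` equal to the length of the
arc from `a` to `b` or of the complementary arc; one of them is the circle distance `d(a, b)`.
Taking `z = ∑ᵢ cᵢ`, the triangle inequality under the integral bounds `∫ |F + z|` by the cost.
-/

open Finset Real MeasureTheory

noncomputable def pairStep (a b y : ℝ) : ℝ := (if a < y then 1 else 0) - (if b < y then 1 else 0)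

lemma pairStep_swap (a b y : ℝ) : pairStep b a y = -pairStep a b y := by
  simp only [pairStep]; ring

lemma intervalIntegrable_pairStep (a b x₁ x₂ : ℝ) :
    IntervalIntegrable (pairStep a b) volume x₁ x₂ := by
  have hmono (c : ℝ) : Monotone fun y : ℝ => if c < y then (1 : ℝ) else 0 := by
    intro x y hxy
    by_cases hx : c < x
    · simp [hx, hx.trans_le hxy]
    · simp only [hx, if_false]
      split_ifs <;> norm_num
  exact (hmono a).intervalIntegrable.sub (hmono b).intervalIntegrable

lemma intervalIntegral_eq_of_eqOn_Ioc {f : ℝ → ℝ} {a b k : ℝ} (hab : a ≤ b)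
    (hf : Set.EqOn f (fun _ => k) (Set.Ioc a b)) :
    ∫ y in a..b, f y = k * (b - a) := by
  rw [intervalIntegral.integral_of_le hab, setIntegral_congr_fun measurableSet_Ioc hf,
    setIntegral_const, Real.volume_real_Ioc_of_le hab, smul_eq_mul, mul_comm]

lemma integral_abs_pairStep_add {a b T : ℝ} (ha : 0 ≤ a) (hab : a ≤ b) (hbT : b ≤ T) (c : ℝ) :
    ∫ y in (0 : ℝ)..T, |pairStep a b y + c| = |c| * (T - (b - a)) + |1 + c| * (b - a) := by
  have hint (x₁ x₂ : ℝ) : IntervalIntegrable (fun y => |pairStep a b y + c|) volume x₁ x₂ :=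
    ((intervalIntegrable_pairStep a b x₁ x₂).add intervalIntegrable_const).abs
  rw [← intervalIntegral.integral_add_adjacent_intervals (hint 0 a) (hint a T),
    ← intervalIntegral.integral_add_adjacent_intervals (hint a b) (hint b T),
    intervalIntegral_eq_of_eqOn_Ioc ha (k := |c|),
    intervalIntegral_eq_of_eqOn_Ioc hab (k := |1 + c|),
    intervalIntegral_eq_of_eqOn_Ioc hbT (k := |c|)]
  · ring
  all_goals
    intro y ⟨hy₁, hy₂⟩
    simp only [pairStep]
  · simp [hab.trans_lt hy₁, hy₁]
  · simp [hy₁, not_lt.2 hy₂]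
  · simp [not_lt.2 hy₂, not_lt.2 (hy₂.trans hab)]

lemma exists_int_integral_abs_pairStep_add_eq_min {a b T : ℝ}
    (ha : a ∈ Set.Icc 0 T) (hb : b ∈ Set.Icc 0 T) :
    ∃ c : ℤ, ∫ y in (0 : ℝ)..T, |pairStep a b y + c| = min |a - b| (T - |a - b|) := by
  wlog hab : a ≤ b generalizing a b
  · obtain ⟨c, hc⟩ := this hb ha (le_of_not_ge hab)
    refine ⟨-c, ?_⟩
    rw [abs_sub_comm a b, ← hc]
    refine intervalIntegral.integral_congr fun y _ => ?_
    rw [pairStep_swap, Int.cast_neg, ← neg_add, abs_neg]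
  rw [abs_sub_comm, abs_of_nonneg (sub_nonneg.2 hab)]
  rcases min_choice (b - a) (T - (b - a)) with h | h
  · exact ⟨0, by rw [h, integral_abs_pairStep_add ha.1 hab hb.2]; norm_num⟩
  · exact ⟨-1, by rw [h, integral_abs_pairStep_add ha.1 hab hb.2]; norm_num⟩

lemma integral_abs_sum_le_sum_integral_abs {ι : Type*} (S : Finset ι) {f : ι → ℝ → ℝ} {T : ℝ}
    (hT : 0 ≤ T) (hf : ∀ i ∈ S, IntervalIntegrable (f i) volume 0 T) :
    ∫ y in (0 : ℝ)..T, |∑ i ∈ S, f i y| ≤ ∑ i ∈ S, ∫ y in (0 : ℝ)..T, |f i y| := by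
  rw [← intervalIntegral.integral_finsetSum fun i hi => (hf i hi).abs]
  refine intervalIntegral.integral_mono_on hT ?_ ?_ fun y _ => abs_sum_le_sum_abs _ _
  · simpa only [Finset.sum_apply] using (IntervalIntegrable.sum S hf).abs
  · simpa only [Finset.sum_fn] using IntervalIntegrable.sum S fun i hi => (hf i hi).abs

lemma sum_pairStep_perm {M : ℕ} (s t : Fin M → ℝ) (σ : Equiv.Perm (Fin M)) (y : ℝ) :
    ∑ i, pairStep (s i) (t (σ i)) y =
      ((univ.filter fun i => s i < y).card : ℝ) - (univ.filter fun i => t i < y).card := by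
  simp only [pairStep]
  rw [Finset.sum_sub_distrib, Equiv.sum_comp σ fun i => if t i < y then (1 : ℝ) else 0]
  simp [Finset.sum_boole]

/-- On the circle of unit radius, the cost of any matching is bounded below by the
minimum over integers `z` of `∫_0^{2π} |F(y) + z| dy`. -/
theorem circle_matching_cost_ge (M : ℕ) (s t : Fin M → ℝ)
    (hs : ∀ i, s i ∈ Set.Ico 0 (2 * π)) (ht : ∀ i, t i ∈ Set.Ico 0 (2 * π))
    (σ : Equiv.Perm (Fin M)) :
    ∑ i, min |s i - t (σ i)| (2 * π - |s i - t (σ i)|) ≥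
      ⨅ z : ℤ, ∫ y in (0:ℝ)..(2 * π),
        |((((univ.filter fun i => s i < y).card : ℤ)
          - ((univ.filter fun i => t i < y).card : ℤ) : ℤ) : ℝ) + (z : ℝ)| := by
  choose c hc using fun i => exists_int_integral_abs_pairStep_add_eq_min
    (Set.Ico_subset_Icc_self (hs i)) (Set.Ico_subset_Icc_self (ht (σ i)))
  have h2π : (0 : ℝ) ≤ 2 * π := by positivity
  have hbdd : BddBelow (Set.range fun z : ℤ => ∫ y in (0:ℝ)..(2 * π),
      |((((univ.filter fun i => s i < y).card : ℤ)
        - ((univ.filter fun i => t i < y).card : ℤ) : ℤ) : ℝ) + (z : ℝ)|) :=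
    ⟨0, by rintro _ ⟨z, rfl⟩; exact intervalIntegral.integral_nonneg h2π fun y _ => abs_nonneg _⟩
  refine (ciInf_le hbdd (∑ i, c i)).trans ?_
  calc _ = ∫ y in (0:ℝ)..(2 * π), |∑ i, (pairStep (s i) (t (σ i)) y + c i)| := by
        refine intervalIntegral.integral_congr fun y _ => ?_
        rw [Finset.sum_add_distrib, sum_pairStep_perm]
        push_cast
        rfl
    _ ≤ ∑ i, ∫ y in (0:ℝ)..(2 * π), |pairStep (s i) (t (σ i)) y + c i| :=
        integral_abs_sum_le_sum_integral_abs _ h2π fun i _ =>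
          (intervalIntegrable_pairStep _ _ _ _).add intervalIntegrable_const
    _ = _ := Finset.sum_congr rfl fun i _ => hc i
end

section
/- Let M ≥ 1 and let s, t : Fin M → ℝ be tuples of points in [0, 2π), with circle distance d(x₁, x₂) = min(|x₁ − x₂|, 2π − |x₁ − x₂|). Then the minimum over all permutations σ of Fin M of ∑_{i} d(s(i), t(σ(i))) equals min_{z ∈ ℤ} ∫_{0}^{2π} |F(y) + z| dy; that is, the minimal bipartite matching cost on the circle is exactly the minimum over integers z of C(z) = ∫_{0}^{2π} |F(y) + z| dy. -/
open Finset Real MeasureTheory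

set_option maxHeartbeats 1000000

noncomputable def stp (a y : ℝ) : ℝ := if a < y then 1 else 0


lemma meas_stp (a : ℝ) : Measurable (stp a) := by
  unfold stp
  exact Measurable.ite measurableSet_Ioi measurable_const measurable_const

lemma stp_bdd (a y : ℝ) : |stp a y| ≤ 1 := by
  unfold stp; split <;> simp

lemma intInt_of_bdd {f : ℝ → ℝ} (hf : Measurable f) (C : ℝ) (hC : ∀ y, |f y| ≤ C)
    (a b : ℝ) : IntervalIntegrable f volume a b := by
  constructor <;>
  · apply Measure.integrableOn_of_bounded (by simp [measure_lt_top]) hf.aestronglyMeasurable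
    exact Filter.Eventually.of_forall (fun y => by simpa using hC y)

lemma integral_step_pair (a b c : ℝ) (h0 : 0 ≤ a) (hab : a ≤ b) (hb : b ≤ 2*π) :
    ∫ y in (0:ℝ)..(2*π), |stp a y - stp b y + c|
      = |1 + c| * (b - a) + |c| * (2 * π - (b - a)) := by
  have hmeas : Measurable fun y => |stp a y - stp b y + c| :=
    (((meas_stp a).sub (meas_stp b)).add measurable_const).abs
  have hbdd : ∀ y, |(|stp a y - stp b y + c|)| ≤ 2 + |c| := by
    intro y
    rw [abs_abs]
    calc |stp a y - stp b y + c| ≤ |stp a y - stp b y| + |c| := abs_add_le _ _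
      _ ≤ (|stp a y| + |stp b y|) + |c| := by gcongr; exact abs_sub _ _
      _ ≤ (1 + 1) + |c| := by
          gcongr <;> (unfold stp; split <;> simp)
      _ = 2 + |c| := by ring
  have hii : ∀ u v : ℝ, IntervalIntegrable (fun y => |stp a y - stp b y + c|) volume u v :=
    intInt_of_bdd hmeas _ hbdd
  have e1 : ∫ y in (0:ℝ)..a, |stp a y - stp b y + c| = a * |c| := by
    rw [intervalIntegral.integral_congr_ae (g := fun _ => |c|), intervalIntegral.integral_const]
    · simp
    · refine Filter.Eventually.of_forall (fun y hy => ?_)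
      rw [Set.uIoc_of_le h0] at hy
      have h1 : ¬ a < y := not_lt.mpr hy.2
      have h2 : ¬ b < y := not_lt.mpr (hy.2.trans hab)
      simp [stp, h1, h2]
  have e2 : ∫ y in a..b, |stp a y - stp b y + c| = (b-a) * |1+c| := by
    rw [intervalIntegral.integral_congr_ae (g := fun _ => |1+c|), intervalIntegral.integral_const]
    · simp
    · refine Filter.Eventually.of_forall (fun y hy => ?_)
      rw [Set.uIoc_of_le hab] at hy
      have h1 : a < y := hy.1
      have h2 : ¬ b < y := not_lt.mpr hy.2
      simp [stp, h1, h2]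
  have e3 : ∫ y in b..(2*π), |stp a y - stp b y + c| = (2*π - b) * |c| := by
    rw [intervalIntegral.integral_congr_ae (g := fun _ => |c|), intervalIntegral.integral_const]
    · simp
    · refine Filter.Eventually.of_forall (fun y hy => ?_)
      rw [Set.uIoc_of_le hb] at hy
      have h1 : a < y := lt_of_le_of_lt hab hy.1
      have h2 : b < y := hy.1
      simp [stp, h1, h2]
  rw [← intervalIntegral.integral_add_adjacent_intervals (b := a) (hii _ _) (hii _ _),
      ← intervalIntegral.integral_add_adjacent_intervals (a := a) (b := b) (hii _ _) (hii _ _),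
      e1, e2, e3]
  ring

lemma step_swap (a b c : ℝ) :
    (fun y => |stp a y - stp b y + c|) = fun y => |stp b y - stp a y + (-c)| := by
  funext y
  rw [← abs_neg]
  ring_nf

lemma pair_dist (a b : ℝ) (ha : a ∈ Set.Ico 0 (2*π)) (hb : b ∈ Set.Ico 0 (2*π)) :
    ∃ ε : ℤ, min |a - b| (2*π - |a - b|)
      = ∫ y in (0:ℝ)..(2*π), |stp a y - stp b y + (ε : ℝ)| := by
  rcases le_total a b with hab | hab
  · have habs : |a - b| = b - a := by rw [abs_sub_comm, abs_of_nonneg (by linarith)]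
    rcases le_total (b - a) (2*π - (b - a)) with h | h
    · refine ⟨0, ?_⟩
      rw [show ((0 : ℤ) : ℝ) = 0 by norm_num, integral_step_pair a b 0 ha.1 hab hb.2.le]
      rw [habs, min_eq_left (by linarith)]
      norm_num
    · refine ⟨-1, ?_⟩
      rw [show ((-1 : ℤ) : ℝ) = -1 by norm_num, integral_step_pair a b (-1) ha.1 hab hb.2.le]
      rw [habs, min_eq_right (by linarith)]
      norm_num
  · have habs : |a - b| = a - b := abs_of_nonneg (by linarith)
    rcases le_total (a - b) (2*π - (a - b)) with h | h
    · refine ⟨0, ?_⟩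
      rw [show ((0 : ℤ) : ℝ) = 0 by norm_num, step_swap,
        integral_step_pair b a (-0) hb.1 hab ha.2.le]
      rw [habs, min_eq_left (by linarith)]
      norm_num
    · refine ⟨1, ?_⟩
      rw [show ((1 : ℤ) : ℝ) = 1 by norm_num, step_swap,
        integral_step_pair b a (-1) hb.1 hab ha.2.le]
      rw [habs, min_eq_right (by linarith)]
      norm_num

lemma Fcnt_eq_sum (M : ℕ) (s t : Fin M → ℝ) (y : ℝ) :
    ((((univ.filter fun i => s i < y).card : ℤ)
      - ((univ.filter fun i => t i < y).card : ℤ) : ℤ) : ℝ)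
    = ∑ i, (stp (s i) y - stp (t i) y) := by
  rw [Finset.sum_sub_distrib]
  unfold stp
  rw [Finset.sum_boole, Finset.sum_boole]
  push_cast
  ring

lemma dir1 (M : ℕ) (s t : Fin M → ℝ) (hs : ∀ i, s i ∈ Set.Ico 0 (2*π))
    (ht : ∀ i, t i ∈ Set.Ico 0 (2*π)) (σ : Equiv.Perm (Fin M)) :
    ∃ z : ℤ, (∫ y in (0:ℝ)..(2*π),
        |((((univ.filter fun i => s i < y).card : ℤ)
          - ((univ.filter fun i => t i < y).card : ℤ) : ℤ) : ℝ) + (z : ℝ)|)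
      ≤ ∑ i, min |s i - t (σ i)| (2*π - |s i - t (σ i)|) := by
  choose ε hε using fun i => pair_dist (s i) (t (σ i)) (hs i) (ht (σ i))
  refine ⟨∑ i, ε i, ?_⟩
  have hfun : ∀ i, ∀ y, |stp (s i) y - stp (t (σ i)) y + (ε i : ℝ)| ≤ 2 + |(ε i : ℝ)| := by
    intro i y
    calc |stp (s i) y - stp (t (σ i)) y + (ε i : ℝ)|
        ≤ |stp (s i) y - stp (t (σ i)) y| + |(ε i : ℝ)| := abs_add_le _ _
      _ ≤ (|stp (s i) y| + |stp (t (σ i)) y|) + |(ε i : ℝ)| := by gcongr; exact abs_sub _ _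
      _ ≤ (1 + 1) + |(ε i : ℝ)| := by gcongr <;> exact stp_bdd _ _
      _ = 2 + |(ε i : ℝ)| := by ring
  have hii : ∀ i, IntervalIntegrable
      (fun y => |stp (s i) y - stp (t (σ i)) y + (ε i : ℝ)|) volume 0 (2*π) := by
    intro i
    exact intInt_of_bdd ((((meas_stp _).sub (meas_stp _)).add measurable_const).abs)
      (2 + |(ε i : ℝ)|) (fun y => by rw [abs_abs]; exact hfun i y) _ _
  have hptF : ∀ y, ((((univ.filter fun i => s i < y).card : ℤ)
      - ((univ.filter fun i => t i < y).card : ℤ) : ℤ) : ℝ) + ((∑ i, ε i : ℤ) : ℝ)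
      = ∑ i, (stp (s i) y - stp (t (σ i)) y + (ε i : ℝ)) := by
    intro y
    rw [Fcnt_eq_sum, Finset.sum_add_distrib, Finset.sum_sub_distrib, Finset.sum_sub_distrib,
      ← Equiv.sum_comp σ (fun j => stp (t j) y)]
    push_cast
    ring
  calc (∫ y in (0:ℝ)..(2*π),
        |((((univ.filter fun i => s i < y).card : ℤ)
          - ((univ.filter fun i => t i < y).card : ℤ) : ℤ) : ℝ) + ((∑ i, ε i : ℤ) : ℝ)|)
      = ∫ y in (0:ℝ)..(2*π), |∑ i, (stp (s i) y - stp (t (σ i)) y + (ε i : ℝ))| := by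
        apply intervalIntegral.integral_congr
        intro y _
        exact congrArg abs (hptF y)
    _ ≤ ∫ y in (0:ℝ)..(2*π), ∑ i, |stp (s i) y - stp (t (σ i)) y + (ε i : ℝ)| := by
        have habs_int : IntervalIntegrable
            (fun y => |∑ i, (stp (s i) y - stp (t (σ i)) y + (ε i : ℝ))|) volume 0 (2*π) :=
          intInt_of_bdd ((Finset.measurable_sum _ (fun i _ =>
            ((meas_stp _).sub (meas_stp _)).add measurable_const)).abs)
            (∑ i, (2 + |(ε i : ℝ)|)) (fun y => by
              rw [abs_abs]
              exact (Finset.abs_sum_le_sum_abs _ _).trans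
                (Finset.sum_le_sum fun i _ => hfun i y)) _ _
        have hsum_int : IntervalIntegrable
            (fun y => ∑ i, |stp (s i) y - stp (t (σ i)) y + (ε i : ℝ)|) volume 0 (2*π) :=
          intInt_of_bdd (Finset.measurable_sum _ (fun i _ =>
            (((meas_stp _).sub (meas_stp _)).add measurable_const).abs))
            (∑ i, (2 + |(ε i : ℝ)|)) (fun y => by
              rw [abs_of_nonneg (Finset.sum_nonneg fun i _ => abs_nonneg _)]
              exact Finset.sum_le_sum fun i _ => hfun i y) _ _
        exact intervalIntegral.integral_mono_on (by positivity) habs_int hsum_int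
          (fun y _ => Finset.abs_sum_le_sum_abs _ _)
    _ = ∑ i, ∫ y in (0:ℝ)..(2*π), |stp (s i) y - stp (t (σ i)) y + (ε i : ℝ)| := by
        exact intervalIntegral.integral_finset_sum (fun i _ => hii i)
    _ = ∑ i, min |s i - t (σ i)| (2*π - |s i - t (σ i)|) := by
        exact Finset.sum_congr rfl fun i _ => (hε i).symm

lemma samesign_sum {M : ℕ} (f : Fin M → ℝ)
    (h : (∀ i, 0 ≤ f i) ∨ (∀ i, f i ≤ 0)) : |∑ i, f i| = ∑ i, |f i| := by
  rcases h with h | h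
  · rw [abs_of_nonneg (Finset.sum_nonneg fun i _ => h i)]
    exact Finset.sum_congr rfl fun i _ => (abs_of_nonneg (h i)).symm
  · rw [abs_of_nonpos (Finset.sum_nonpos fun i _ => h i), ← Finset.sum_neg_distrib]
    exact Finset.sum_congr rfl fun i _ => (abs_of_nonpos (h i)).symm

lemma abs_eq_integral (a b : ℝ) (ha : a ∈ Set.Ico 0 (2*π)) (hb : b ∈ Set.Ico 0 (2*π)) :
    |a - b| = ∫ y in (0:ℝ)..(2*π), |stp a y - stp b y| := by
  rcases le_total a b with hab | hab
  · have : (fun y => |stp a y - stp b y|) = fun y => |stp a y - stp b y + 0| := by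
      funext y; rw [add_zero]
    rw [this, integral_step_pair a b 0 ha.1 hab hb.2.le, abs_sub_comm,
      abs_of_nonneg (by linarith)]
    norm_num
  · have : (fun y => |stp a y - stp b y|) = fun y => |stp b y - stp a y + (-0)| := by
      rw [← step_swap]; funext y; rw [add_zero]
    rw [this, integral_step_pair b a (-0) hb.1 hab ha.2.le, abs_of_nonneg (by linarith)]
    norm_num

lemma stp_mem01 (a y : ℝ) : stp a y = 0 ∨ stp a y = 1 := by
  unfold stp; split <;> simp

lemma stp_sub_neg {a b y : ℝ} (h : stp a y - stp b y < 0) : ¬ a < y ∧ b < y := by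
  unfold stp at h
  constructor
  · intro ha; rw [if_pos ha] at h; split_ifs at h <;> linarith
  · by_contra hb; rw [if_neg hb] at h; split_ifs at h <;> linarith

lemma stp_sub_pos {a b y : ℝ} (h : 0 < stp a y - stp b y) : a < y ∧ ¬ b < y := by
  unfold stp at h
  constructor
  · by_contra ha; rw [if_neg ha] at h; split_ifs at h <;> linarith
  · intro hb; rw [if_pos hb] at h; split_ifs at h <;> linarith

lemma sorted_signs {M : ℕ} (a b : Fin M → ℝ) (ha : Monotone a) (hb : Monotone b) (y : ℝ) :
    (∀ i, 0 ≤ stp (a i) y - stp (b i) y) ∨ (∀ i, stp (a i) y - stp (b i) y ≤ 0) := by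
  by_cases hex : ∃ i, stp (a i) y - stp (b i) y < 0
  · right
    obtain ⟨i₀, hi₀⟩ := hex
    obtain ⟨hai₀, hbi₀⟩ := stp_sub_neg hi₀
    intro j
    by_contra hj
    push_neg at hj
    obtain ⟨haj, hbj⟩ := stp_sub_pos hj
    have h1 : ¬ i₀ ≤ j := fun h => hai₀ (lt_of_le_of_lt (ha h) haj)
    have h2 : ¬ j ≤ i₀ := fun h => hbj (lt_of_le_of_lt (hb h) hbi₀)
    exact h1 (le_of_not_ge h2)
  · left
    push_neg at hex
    exact hex

lemma sorted_sum_eq {M : ℕ} (a b : Fin M → ℝ) (ha : Monotone a) (hb : Monotone b)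
    (ha' : ∀ i, a i ∈ Set.Ico 0 (2*π)) (hb' : ∀ i, b i ∈ Set.Ico 0 (2*π)) :
    ∑ i, |a i - b i| = ∫ y in (0:ℝ)..(2*π), |∑ i, (stp (a i) y - stp (b i) y)| := by
  have h1 : ∑ i, |a i - b i|
      = ∑ i, ∫ y in (0:ℝ)..(2*π), |stp (a i) y - stp (b i) y| :=
    Finset.sum_congr rfl fun i _ => abs_eq_integral _ _ (ha' i) (hb' i)
  have hii : ∀ i : Fin M, IntervalIntegrable
      (fun y => |stp (a i) y - stp (b i) y|) volume 0 (2*π) := by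
    intro i
    refine intInt_of_bdd (((meas_stp _).sub (meas_stp _)).abs) 2 (fun y => ?_) _ _
    rw [abs_abs]
    calc |stp (a i) y - stp (b i) y| ≤ |stp (a i) y| + |stp (b i) y| := abs_sub _ _
      _ ≤ 1 + 1 := by
          gcongr <;> (rcases stp_mem01 _ y with h | h <;> rw [h] <;> norm_num)
      _ = 2 := by norm_num
  rw [h1, ← intervalIntegral.integral_finset_sum (fun i _ => hii i)]
  apply intervalIntegral.integral_congr
  intro y _
  exact ((samesign_sum _ (sorted_signs a b ha hb y)).symm)

lemma stp_cut {y₀ x : ℝ} (hx : x ∈ Set.Ico 0 (2*π)) (hy₀ : y₀ ∈ Set.Ioo 0 (2*π))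
    {w : ℝ} (hw : w ∈ Set.Icc 0 (2*π)) :
    stp (if y₀ ≤ x then x - y₀ else x - y₀ + 2*π) w
      = stp x (y₀ + w) - stp x y₀ + stp x (y₀ + w - 2*π) := by
  by_cases hyx : y₀ ≤ x
  · rw [if_pos hyx]
    have h1 : stp x y₀ = 0 := if_neg (not_lt.mpr hyx)
    have h2 : stp x (y₀ + w - 2*π) = 0 := if_neg (by push_neg; nlinarith [hw.2, hy₀.1])
    rw [h1, h2, sub_zero, add_zero]
    unfold stp
    exact if_congr ⟨fun h => by linarith, fun h => by linarith⟩ rfl rfl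
  · push_neg at hyx
    rw [if_neg (not_le.mpr hyx)]
    have h1 : stp x y₀ = 1 := if_pos hyx
    have h2 : stp x (y₀ + w) = 1 := if_pos (by linarith [hw.1])
    rw [h1, h2]
    unfold stp
    have hr : (1:ℝ) - 1 + (if x < y₀ + w - 2*π then (1:ℝ) else 0)
        = if x < y₀ + w - 2*π then (1:ℝ) else 0 := by ring
    rw [hr]
    exact if_congr ⟨fun h => by linarith, fun h => by linarith⟩ rfl rfl

lemma stp_left {x y : ℝ} (hx : 0 ≤ x) (hy : y ≤ 0) : stp x y = 0 :=
  if_neg (by push_neg; linarith)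

lemma stp_right {x y : ℝ} (hx : x < 2*π) (hy : 2*π ≤ y) : stp x y = 1 :=
  if_pos (lt_of_lt_of_le hx hy)

lemma cut_lemma {M : ℕ} (s t : Fin M → ℝ) (hs : ∀ i, s i ∈ Set.Ico 0 (2*π))
    (ht : ∀ i, t i ∈ Set.Ico 0 (2*π)) (y₀ : ℝ) (hy₀ : y₀ ∈ Set.Ioo 0 (2*π)) :
    ∃ σ : Equiv.Perm (Fin M), ∑ i, min |s i - t (σ i)| (2*π - |s i - t (σ i)|)
      ≤ ∫ y in (0:ℝ)..(2*π),
          |(∑ i, (stp (s i) y - stp (t i) y)) - ∑ i, (stp (s i) y₀ - stp (t i) y₀)| := by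
  have hπ : 0 < π := pi_pos
  set u : Fin M → ℝ := fun i => if y₀ ≤ s i then s i - y₀ else s i - y₀ + 2*π with hu_def
  set v : Fin M → ℝ := fun i => if y₀ ≤ t i then t i - y₀ else t i - y₀ + 2*π with hv_def
  have hu : ∀ i, u i ∈ Set.Ico 0 (2*π) := by
    intro i
    simp only [hu_def]
    split_ifs with h
    · exact ⟨by linarith, by linarith [(hs i).2, hy₀.1]⟩
    · push_neg at h
      exact ⟨by linarith [(hs i).1, hy₀.2], by linarith⟩
  have hv : ∀ i, v i ∈ Set.Ico 0 (2*π) := by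
    intro i
    simp only [hv_def]
    split_ifs with h
    · exact ⟨by linarith, by linarith [(ht i).2, hy₀.1]⟩
    · push_neg at h
      exact ⟨by linarith [(ht i).1, hy₀.2], by linarith⟩
  -- distance bound
  have hd : ∀ i j, min |s i - t j| (2*π - |s i - t j|) ≤ |u i - v j| := by
    intro i j
    have hsx := hs i; have htx := ht j
    have hb1 : s i - t j < 2*π := by linarith [hsx.2, htx.1]
    have hb2 : -(2*π) < s i - t j := by linarith [hsx.1, htx.2]
    simp only [hu_def, hv_def]
    split_ifs with h1 h2 h2
    · have he : s i - y₀ - (t j - y₀) = s i - t j := by ring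
      rw [he]
      exact min_le_left _ _
    · have he : s i - y₀ - (t j - y₀ + 2*π) = (s i - t j) - 2*π := by ring
      rw [he, abs_of_nonpos (a := s i - t j - 2*π) (by linarith)]
      refine le_trans (min_le_right _ _) ?_
      have := le_abs_self (s i - t j)
      linarith
    · have he : s i - y₀ + 2*π - (t j - y₀) = (s i - t j) + 2*π := by ring
      rw [he, abs_of_nonneg (a := s i - t j + 2*π) (by linarith)]
      refine le_trans (min_le_right _ _) ?_
      have := neg_abs_le (s i - t j)
      linarith
    · have he : s i - y₀ + 2*π - (t j - y₀ + 2*π) = s i - t j := by ring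
      rw [he]
      exact min_le_left _ _
  -- sorted versions
  set es := Tuple.sort u with hes
  set et := Tuple.sort v with het
  have hmu : Monotone (u ∘ es) := Tuple.monotone_sort u
  have hmv : Monotone (v ∘ et) := Tuple.monotone_sort v
  refine ⟨es.symm.trans et, ?_⟩
  have step1 : ∑ i, min |s i - t ((es.symm.trans et) i)| (2*π - |s i - t ((es.symm.trans et) i)|)
      ≤ ∑ i, |u i - v ((es.symm.trans et) i)| :=
    Finset.sum_le_sum fun i _ => hd i _
  have step2 : ∑ i, |u i - v ((es.symm.trans et) i)| = ∑ k, |(u ∘ es) k - (v ∘ et) k| := by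
    rw [← Equiv.sum_comp es (fun i => |u i - v ((es.symm.trans et) i)|)]
    apply Finset.sum_congr rfl
    intro k _
    simp [Equiv.symm_apply_apply]
  have step3 : ∑ k, |(u ∘ es) k - (v ∘ et) k|
      = ∫ y in (0:ℝ)..(2*π), |∑ i, (stp (u i) y - stp (v i) y)| := by
    rw [sorted_sum_eq (u ∘ es) (v ∘ et) hmu hmv (fun k => hu (es k)) (fun k => hv (et k))]
    apply intervalIntegral.integral_congr
    intro y _
    have e1 : ∑ k, stp ((u ∘ es) k) y = ∑ i, stp (u i) y :=
      Equiv.sum_comp es (fun i => stp (u i) y)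
    have e2 : ∑ k, stp ((v ∘ et) k) y = ∑ i, stp (v i) y :=
      Equiv.sum_comp et (fun i => stp (v i) y)
    simp only [Finset.sum_sub_distrib]
    rw [e1, e2]
  -- the cut identity
  set P : ℝ → ℝ := fun y => ∑ i, (stp (s i) y - stp (t i) y) with hP_def
  have hPmeas : Measurable P := by
    apply Finset.measurable_sum
    intro i _
    exact (meas_stp _).sub (meas_stp _)
  have hPbdd : ∀ y, |P y| ≤ 2 * M := by
    intro y
    calc |P y| ≤ ∑ i, |stp (s i) y - stp (t i) y| := Finset.abs_sum_le_sum_abs _ _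
      _ ≤ ∑ _i : Fin M, 2 := by
          apply Finset.sum_le_sum
          intro i _
          calc |stp (s i) y - stp (t i) y| ≤ |stp (s i) y| + |stp (t i) y| := abs_sub _ _
            _ ≤ 1 + 1 := add_le_add (stp_bdd _ _) (stp_bdd _ _)
            _ = 2 := by norm_num
      _ = 2 * M := by simp [mul_comm]
  set c : ℝ := P y₀ with hc_def
  have hQint : ∀ (d e : ℝ) (r : ℝ), IntervalIntegrable (fun y => |P (y + r) - c|) volume d e := by
    intro d e r
    refine intInt_of_bdd ((hPmeas.comp (measurable_id.add_const r)).sub measurable_const).abs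
      (2*M + |c|) (fun y => ?_) _ _
    rw [abs_abs]
    calc |P (y + r) - c| ≤ |P (y + r)| + |c| := abs_sub _ _
      _ ≤ 2*M + |c| := by gcongr; exact hPbdd _
  have cutid : ∀ w ∈ Set.Icc (0:ℝ) (2*π), ∑ i, (stp (u i) w - stp (v i) w)
      = P (y₀ + w) - c + P (y₀ + w - 2*π) := by
    intro w hw
    have hterm : ∀ i : Fin M, stp (u i) w - stp (v i) w
        = (stp (s i) (y₀ + w) - stp (t i) (y₀ + w))
          - (stp (s i) y₀ - stp (t i) y₀)
          + (stp (s i) (y₀ + w - 2*π) - stp (t i) (y₀ + w - 2*π)) := by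
      intro i
      simp only [hu_def, hv_def]
      rw [stp_cut (hs i) hy₀ hw, stp_cut (ht i) hy₀ hw]
      ring
    rw [Finset.sum_congr rfl (fun i _ => hterm i)]
    simp only [hP_def, hc_def, Finset.sum_add_distrib, Finset.sum_sub_distrib]
  have stepint : ∫ y in (0:ℝ)..(2*π), |∑ i, (stp (u i) y - stp (v i) y)|
      = ∫ y in (0:ℝ)..(2*π), |P y - c| := by
    have hy2 : y₀ ≤ 2*π := hy₀.2.le
    have hy1 : 0 ≤ y₀ := hy₀.1.le
    have e0 : ∫ w in (0:ℝ)..(2*π), |∑ i, (stp (u i) w - stp (v i) w)|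
        = ∫ w in (0:ℝ)..(2*π), |P (y₀ + w) - c + P (y₀ + w - 2*π)| := by
      apply intervalIntegral.integral_congr
      intro w hw
      rw [Set.uIcc_of_le (by positivity)] at hw
      exact congrArg abs (cutid w hw)
    rw [e0]
    have hsplit : ∫ w in (0:ℝ)..(2*π), |P (y₀ + w) - c + P (y₀ + w - 2*π)|
        = (∫ w in (0:ℝ)..(2*π - y₀), |P (y₀ + w) - c + P (y₀ + w - 2*π)|)
          + ∫ w in (2*π - y₀)..(2*π), |P (y₀ + w) - c + P (y₀ + w - 2*π)| := by
      rw [intervalIntegral.integral_add_adjacent_intervals]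
      · refine intInt_of_bdd ?_ (2*(2*M) + |c|) (fun y => ?_) _ _
        · exact (((hPmeas.comp (measurable_const.add measurable_id)).sub
            measurable_const).add (hPmeas.comp ((measurable_const.add measurable_id).add_const _))).abs
        · rw [abs_abs]
          calc |P (y₀ + y) - c + P (y₀ + y - 2*π)|
              ≤ |P (y₀ + y) - c| + |P (y₀ + y - 2*π)| := abs_add_le _ _
            _ ≤ (|P (y₀ + y)| + |c|) + |P (y₀ + y - 2*π)| := by gcongr; exact abs_sub _ _
            _ ≤ (2*M + |c|) + 2*M := by gcongr <;> exact hPbdd _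
            _ = 2*(2*M) + |c| := by ring
      · refine intInt_of_bdd ?_ (2*(2*M) + |c|) (fun y => ?_) _ _
        · exact (((hPmeas.comp (measurable_const.add measurable_id)).sub
            measurable_const).add (hPmeas.comp ((measurable_const.add measurable_id).add_const _))).abs
        · rw [abs_abs]
          calc |P (y₀ + y) - c + P (y₀ + y - 2*π)|
              ≤ |P (y₀ + y) - c| + |P (y₀ + y - 2*π)| := abs_add_le _ _
            _ ≤ (|P (y₀ + y)| + |c|) + |P (y₀ + y - 2*π)| := by gcongr; exact abs_sub _ _
            _ ≤ (2*M + |c|) + 2*M := by gcongr <;> exact hPbdd _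
            _ = 2*(2*M) + |c| := by ring
    rw [hsplit]
    have hP0 : ∀ y ≤ (0:ℝ), P y = 0 := by
      intro y hy
      simp only [hP_def]
      apply Finset.sum_eq_zero
      intro i _
      rw [stp_left (hs i).1 hy, stp_left (ht i).1 hy, sub_zero]
    have hP2 : ∀ y, 2*π ≤ y → P y = 0 := by
      intro y hy
      simp only [hP_def]
      apply Finset.sum_eq_zero
      intro i _
      rw [stp_right (hs i).2 hy, stp_right (ht i).2 hy, sub_self]
    have piece1 : ∫ w in (0:ℝ)..(2*π - y₀), |P (y₀ + w) - c + P (y₀ + w - 2*π)|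
        = ∫ y in y₀..(2*π), |P y - c| := by
      have e1 : ∫ w in (0:ℝ)..(2*π - y₀), |P (y₀ + w) - c + P (y₀ + w - 2*π)|
          = ∫ w in (0:ℝ)..(2*π - y₀), |P (w + y₀) - c| := by
        apply intervalIntegral.integral_congr
        intro w hw
        rw [Set.uIcc_of_le (by linarith)] at hw
        show |P (y₀ + w) - c + P (y₀ + w - 2*π)| = |P (w + y₀) - c|
        rw [hP0 (y₀ + w - 2*π) (by linarith [hw.2]), add_zero, add_comm y₀ w]
      rw [e1, intervalIntegral.integral_comp_add_right (fun y => |P y - c|) y₀,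
        zero_add, sub_add_cancel]
    have piece2 : ∫ w in (2*π - y₀)..(2*π), |P (y₀ + w) - c + P (y₀ + w - 2*π)|
        = ∫ y in (0:ℝ)..y₀, |P y - c| := by
      have e1 : ∫ w in (2*π - y₀)..(2*π), |P (y₀ + w) - c + P (y₀ + w - 2*π)|
          = ∫ w in (2*π - y₀)..(2*π), |P (w + (y₀ - 2*π)) - c| := by
        apply intervalIntegral.integral_congr
        intro w hw
        rw [Set.uIcc_of_le (by linarith)] at hw
        show |P (y₀ + w) - c + P (y₀ + w - 2*π)| = |P (w + (y₀ - 2*π)) - c|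
        rw [hP2 (y₀ + w) (by linarith [hw.1]),
          show y₀ + w - 2*π = w + (y₀ - 2*π) by ring]
        congr 1
        ring
      rw [e1, intervalIntegral.integral_comp_add_right (fun y => |P y - c|) (y₀ - 2*π)]
      norm_num
    have hQ2 : ∀ d e : ℝ, IntervalIntegrable (fun y => |P y - c|) volume d e := by
      intro d e
      refine intInt_of_bdd ((hPmeas.sub measurable_const).abs) (2*M + |c|) (fun y => ?_) _ _
      rw [abs_abs]
      calc |P y - c| ≤ |P y| + |c| := abs_sub _ _
        _ ≤ 2*M + |c| := by gcongr; exact hPbdd _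
    rw [piece1, piece2, add_comm]
    exact intervalIntegral.integral_add_adjacent_intervals (hQ2 0 y₀) (hQ2 y₀ (2*π))
  exact le_of_le_of_eq step1 (step2.trans (step3.trans stepint))

lemma int_abs_comb (m : ℤ) (hm : m ≠ 0) :
    |(m:ℝ) - 1| + |(m:ℝ) + 1| - 2*|(m:ℝ)| = 0 := by
  rcases lt_or_gt_of_ne hm with h | h
  · have h1 : (m:ℝ) ≤ -1 := by exact_mod_cast (by omega : m ≤ -1)
    rw [abs_of_nonpos (by linarith), abs_of_nonpos (by linarith),
      abs_of_nonpos (by linarith)]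
    ring
  · have h1 : (1:ℝ) ≤ m := by exact_mod_cast (by omega : 1 ≤ m)
    rw [abs_of_nonneg (by linarith), abs_of_nonneg (by linarith),
      abs_of_nonneg (by linarith)]
    ring

lemma exists_zero {M : ℕ} (s t : Fin M → ℝ) (hs : ∀ i, s i ∈ Set.Ico 0 (2*π))
    (ht : ∀ i, t i ∈ Set.Ico 0 (2*π)) (z : ℤ)
    (h : 2 * (∫ y in (0:ℝ)..(2*π),
          |((((univ.filter fun i => s i < y).card : ℤ)
            - ((univ.filter fun i => t i < y).card : ℤ) : ℤ) : ℝ) + (z : ℝ)|)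
        < (∫ y in (0:ℝ)..(2*π),
          |((((univ.filter fun i => s i < y).card : ℤ)
            - ((univ.filter fun i => t i < y).card : ℤ) : ℤ) : ℝ) + ((z - 1 : ℤ) : ℝ)|)
        + ∫ y in (0:ℝ)..(2*π),
          |((((univ.filter fun i => s i < y).card : ℤ)
            - ((univ.filter fun i => t i < y).card : ℤ) : ℤ) : ℝ) + ((z + 1 : ℤ) : ℝ)|) :
    ∃ y₀ ∈ Set.Ioo (0:ℝ) (2*π),
      (((univ.filter fun i => s i < y₀).card : ℤ)
        - ((univ.filter fun i => t i < y₀).card : ℤ)) = -z := by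
  by_contra hno
  push_neg at hno
  set N : ℝ → ℤ := fun y => (((univ.filter fun i => s i < y).card : ℤ)
    - ((univ.filter fun i => t i < y).card : ℤ)) with hN_def
  have hNr : ∀ y, ((N y : ℤ) : ℝ) = ∑ i, (stp (s i) y - stp (t i) y) :=
    fun y => Fcnt_eq_sum M s t y
  have hNmeas : Measurable fun y => ((N y : ℤ) : ℝ) := by
    have : (fun y => ((N y : ℤ) : ℝ)) = fun y => ∑ i, (stp (s i) y - stp (t i) y) :=
      funext hNr
    rw [this]
    exact Finset.measurable_sum _ (fun i _ => (meas_stp _).sub (meas_stp _))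
  have hNbdd : ∀ y, |((N y : ℤ) : ℝ)| ≤ 2 * M := by
    intro y
    rw [hNr]
    calc |∑ i, (stp (s i) y - stp (t i) y)|
        ≤ ∑ i, |stp (s i) y - stp (t i) y| := Finset.abs_sum_le_sum_abs _ _
      _ ≤ ∑ _i : Fin M, 2 := Finset.sum_le_sum (fun i _ => by
          calc |stp (s i) y - stp (t i) y| ≤ |stp (s i) y| + |stp (t i) y| := abs_sub _ _
            _ ≤ 1 + 1 := add_le_add (stp_bdd _ _) (stp_bdd _ _)
            _ = 2 := by norm_num)
      _ = 2 * M := by simp [mul_comm]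
  have hInt : ∀ w : ℤ, IntervalIntegrable
      (fun y => |((N y : ℤ) : ℝ) + (w : ℝ)|) volume 0 (2*π) := by
    intro w
    refine intInt_of_bdd ((hNmeas.add_const _).abs) (2*M + |(w:ℝ)|) (fun y => ?_) _ _
    rw [abs_abs]
    calc |((N y : ℤ) : ℝ) + (w:ℝ)| ≤ |((N y : ℤ) : ℝ)| + |(w:ℝ)| := abs_add_le _ _
      _ ≤ 2*M + |(w:ℝ)| := by gcongr; exact hNbdd _
  have hcombo : ∫ y in (0:ℝ)..(2*π),
      (|((N y : ℤ) : ℝ) + ((z - 1 : ℤ) : ℝ)| + |((N y : ℤ) : ℝ) + ((z + 1 : ℤ) : ℝ)|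
        - 2 * |((N y : ℤ) : ℝ) + (z : ℝ)|)
      = (∫ y in (0:ℝ)..(2*π), |((N y : ℤ) : ℝ) + ((z - 1 : ℤ) : ℝ)|)
        + (∫ y in (0:ℝ)..(2*π), |((N y : ℤ) : ℝ) + ((z + 1 : ℤ) : ℝ)|)
        - 2 * ∫ y in (0:ℝ)..(2*π), |((N y : ℤ) : ℝ) + (z : ℝ)| := by
    rw [intervalIntegral.integral_sub ((hInt (z-1)).add (hInt (z+1)))
        ((hInt z).const_mul 2),
      intervalIntegral.integral_add (hInt (z-1)) (hInt (z+1)),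
      intervalIntegral.integral_const_mul]
  have hzero : ∫ y in (0:ℝ)..(2*π),
      (|((N y : ℤ) : ℝ) + ((z - 1 : ℤ) : ℝ)| + |((N y : ℤ) : ℝ) + ((z + 1 : ℤ) : ℝ)|
        - 2 * |((N y : ℤ) : ℝ) + (z : ℝ)|) = 0 := by
    have h2π : ∀ᵐ (y : ℝ), y ≠ 2*π := by
      rw [MeasureTheory.ae_iff]
      simp only [ne_eq, not_not, Set.setOf_eq_eq_singleton]
      exact Real.volume_singleton
    rw [intervalIntegral.integral_congr_ae (g := fun _ => (0:ℝ))]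
    · exact intervalIntegral.integral_zero
    · filter_upwards [h2π] with y hy hymem
      rw [Set.uIoc_of_le (by positivity)] at hymem
      have hyIoo : y ∈ Set.Ioo (0:ℝ) (2*π) := ⟨hymem.1, lt_of_le_of_ne hymem.2 hy⟩
      have hm : N y + z ≠ 0 := by
        intro hq
        apply hno y hyIoo
        simp only [hN_def] at hq
        omega
      have e1 : ((N y : ℤ) : ℝ) + ((z - 1 : ℤ) : ℝ) = ((N y + z : ℤ) : ℝ) - 1 := by
        push_cast; ring
      have e2 : ((N y : ℤ) : ℝ) + ((z + 1 : ℤ) : ℝ) = ((N y + z : ℤ) : ℝ) + 1 := by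
        push_cast; ring
      have e3 : ((N y : ℤ) : ℝ) + (z : ℝ) = ((N y + z : ℤ) : ℝ) := by push_cast; ring
      rw [e1, e2, e3]
      exact int_abs_comb _ hm
  rw [hcombo] at hzero
  simp only [hN_def] at hzero
  linarith

/-- The minimal bipartite matching cost on the circle of unit radius equals the
minimum over integers `z` of `C(z) = ∫_0^{2π} |F(y) + z| dy`. -/
theorem circle_min_matching_cost_eq (M : ℕ) (hM : 1 ≤ M) (s t : Fin M → ℝ)
    (hs : ∀ i, s i ∈ Set.Ico 0 (2 * π)) (ht : ∀ i, t i ∈ Set.Ico 0 (2 * π)) :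
    (⨅ σ : Equiv.Perm (Fin M),
        ∑ i, min |s i - t (σ i)| (2 * π - |s i - t (σ i)|)) =
      ⨅ z : ℤ, ∫ y in (0:ℝ)..(2 * π),
        |((((univ.filter fun i => s i < y).card : ℤ)
          - ((univ.filter fun i => t i < y).card : ℤ) : ℤ) : ℝ) + (z : ℝ)| := by
  have hπ : 0 < π := pi_pos
  set N : ℝ → ℤ := fun y => ((univ.filter fun i => s i < y).card : ℤ)
    - ((univ.filter fun i => t i < y).card : ℤ) with hN_def
  set C : ℤ → ℝ := fun z => ∫ y in (0:ℝ)..(2 * π), |((N y : ℤ) : ℝ) + (z : ℝ)| with hC_def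
  set cost : Equiv.Perm (Fin M) → ℝ :=
    fun σ => ∑ i, min |s i - t (σ i)| (2 * π - |s i - t (σ i)|) with hcost_def
  show (⨅ σ, cost σ) = ⨅ z, C z
  -- basic facts about N
  have hNr : ∀ y, ((N y : ℤ) : ℝ) = ∑ i, (stp (s i) y - stp (t i) y) :=
    fun y => Fcnt_eq_sum M s t y
  have hNmeas : Measurable fun y => ((N y : ℤ) : ℝ) := by
    have : (fun y => ((N y : ℤ) : ℝ)) = fun y => ∑ i, (stp (s i) y - stp (t i) y) :=
      funext hNr
    rw [this]
    exact Finset.measurable_sum _ (fun i _ => (meas_stp _).sub (meas_stp _))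
  have hNbdd : ∀ y, |((N y : ℤ) : ℝ)| ≤ 2 * M := by
    intro y
    rw [hNr]
    calc |∑ i, (stp (s i) y - stp (t i) y)|
        ≤ ∑ i, |stp (s i) y - stp (t i) y| := Finset.abs_sum_le_sum_abs _ _
      _ ≤ ∑ _i : Fin M, 2 := Finset.sum_le_sum (fun i _ => by
          calc |stp (s i) y - stp (t i) y| ≤ |stp (s i) y| + |stp (t i) y| := abs_sub _ _
            _ ≤ 1 + 1 := add_le_add (stp_bdd _ _) (stp_bdd _ _)
            _ = 2 := by norm_num)
      _ = 2 * M := by simp [mul_comm]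
  have hInt : ∀ w : ℤ, IntervalIntegrable
      (fun y => |((N y : ℤ) : ℝ) + (w : ℝ)|) volume 0 (2 * π) := by
    intro w
    refine intInt_of_bdd ((hNmeas.add_const _).abs) (2*M + |(w:ℝ)|) (fun y => ?_) _ _
    rw [abs_abs]
    calc |((N y : ℤ) : ℝ) + (w:ℝ)| ≤ |((N y : ℤ) : ℝ)| + |(w:ℝ)| := abs_add_le _ _
      _ ≤ 2*M + |(w:ℝ)| := by gcongr; exact hNbdd _
  have hC_nonneg : ∀ z, 0 ≤ C z := fun z =>
    intervalIntegral.integral_nonneg (by positivity) (fun y _ => abs_nonneg _)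
  have cost_nonneg : ∀ σ, 0 ≤ cost σ := by
    intro σ
    apply Finset.sum_nonneg
    intro i _
    apply le_min (abs_nonneg _)
    have h1 := (hs i).1; have h2 := (hs i).2
    have h3 := (ht (σ i)).1; have h4 := (ht (σ i)).2
    have : |s i - t (σ i)| ≤ 2 * π := by
      rw [abs_le]; constructor <;> linarith
    linarith
  -- lower/upper bounds on C
  have hlow : ∀ z : ℤ, 2 * π * (|(z:ℝ)| - 2*M) ≤ C z := by
    intro z
    have hpt : ∀ y ∈ Set.Icc (0:ℝ) (2*π), |(z:ℝ)| - 2*M ≤ |((N y : ℤ) : ℝ) + (z : ℝ)| := by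
      intro y _
      have h1 : |(z:ℝ)| ≤ |((N y : ℤ) : ℝ) + (z:ℝ)| + |((N y : ℤ) : ℝ)| := by
        calc |(z:ℝ)| = |(((N y : ℤ) : ℝ) + (z:ℝ)) + (-((N y : ℤ) : ℝ))| := by
              congr 1; ring
          _ ≤ |((N y : ℤ) : ℝ) + (z:ℝ)| + |(-((N y : ℤ) : ℝ))| := abs_add_le _ _
          _ = |((N y : ℤ) : ℝ) + (z:ℝ)| + |((N y : ℤ) : ℝ)| := by rw [abs_neg]
      have h2 := hNbdd y
      linarith
    calc 2 * π * (|(z:ℝ)| - 2*M) = (2*π - 0) • (|(z:ℝ)| - 2*M) := by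
          rw [smul_eq_mul]; ring
      _ = ∫ _y in (0:ℝ)..(2*π), (|(z:ℝ)| - 2*M) := (intervalIntegral.integral_const _).symm
      _ ≤ C z := intervalIntegral.integral_mono_on (by positivity)
          (intervalIntegrable_const) (hInt z) hpt
  have hCzero : C 0 ≤ 2 * π * (2*M) := by
    have hpt : ∀ y ∈ Set.Icc (0:ℝ) (2*π), |((N y : ℤ) : ℝ) + ((0:ℤ) : ℝ)| ≤ 2*(M:ℝ) := by
      intro y _
      rw [Int.cast_zero, add_zero]
      exact hNbdd y
    calc C 0 ≤ ∫ _y in (0:ℝ)..(2*π), 2*(M:ℝ) :=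
          intervalIntegral.integral_mono_on (by positivity) (hInt 0)
            (intervalIntegrable_const) hpt
      _ = (2*π - 0) • (2*(M:ℝ)) := intervalIntegral.integral_const _
      _ = 2 * π * (2*M) := by rw [smul_eq_mul]; ring
  -- minimizer over a large box
  have hS0 : (0:ℤ) ∈ Finset.Icc (-(4*(M:ℤ)+1)) (4*(M:ℤ)+1) := by
    simp only [Finset.mem_Icc]; omega
  obtain ⟨z₀, hz₀S, hz₀min⟩ :=
    Finset.exists_min_image (Finset.Icc (-(4*(M:ℤ)+1)) (4*(M:ℤ)+1)) C ⟨0, hS0⟩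
  have houtside : ∀ z : ℤ, z ∉ Finset.Icc (-(4*(M:ℤ)+1)) (4*(M:ℤ)+1) → C 0 < C z := by
    intro z hz
    have hzbig : 4*(M:ℝ) + 2 ≤ |(z:ℝ)| := by
      simp only [Finset.mem_Icc, not_and_or, not_le] at hz
      rcases hz with h | h
      · have : (z:ℝ) ≤ -(4*(M:ℝ)+2) := by exact_mod_cast (by omega : z ≤ -(4*(M:ℤ)+2))
        calc 4*(M:ℝ) + 2 = -(-(4*(M:ℝ)+2)) := by ring
          _ ≤ -(z:ℝ) := by linarith
          _ ≤ |(z:ℝ)| := neg_le_abs _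
      · have : (4*(M:ℝ)+2) ≤ (z:ℝ) := by exact_mod_cast (by omega : (4*(M:ℤ)+2) ≤ z)
        exact this.trans (le_abs_self _)
    have := hlow z
    have hM1 : (0:ℝ) ≤ M := Nat.cast_nonneg M
    nlinarith [hCzero]
  have hminall : ∀ z, C z₀ ≤ C z := by
    intro z
    by_cases hz : z ∈ Finset.Icc (-(4*(M:ℤ)+1)) (4*(M:ℤ)+1)
    · exact hz₀min z hz
    · exact (hz₀min 0 hS0).trans (houtside z hz).le
  -- largest minimizer
  have hz₀T : z₀ ∈ (Finset.Icc (-(4*(M:ℤ)+1)) (4*(M:ℤ)+1)).filter (fun z => C z ≤ C z₀) :=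
    Finset.mem_filter.mpr ⟨hz₀S, le_refl _⟩
  set T := (Finset.Icc (-(4*(M:ℤ)+1)) (4*(M:ℤ)+1)).filter (fun z => C z ≤ C z₀) with hT_def
  have hTne : T.Nonempty := ⟨z₀, hz₀T⟩
  set z₁ := T.max' hTne with hz₁_def
  have hz₁T : z₁ ∈ T := T.max'_mem hTne
  have hz₁le : C z₁ ≤ C z₀ := (Finset.mem_filter.mp hz₁T).2
  have hz₁min : ∀ z, C z₁ ≤ C z := fun z => hz₁le.trans (hminall z)
  have hup : C z₀ < C (z₁ + 1) := by
    by_contra hc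
    push_neg at hc
    have hmem : z₁ + 1 ∈ Finset.Icc (-(4*(M:ℤ)+1)) (4*(M:ℤ)+1) := by
      by_contra hn
      exact absurd (lt_of_le_of_lt (hminall 0) (houtside _ hn))
        (not_lt.mpr hc)
    have hmemT : z₁ + 1 ∈ T := Finset.mem_filter.mpr ⟨hmem, hc⟩
    have := T.le_max' _ hmemT
    omega
  have hcomb : 2 * C z₁ < C (z₁ - 1) + C (z₁ + 1) := by
    have h1 : C z₁ ≤ C (z₁ - 1) := hz₁min _
    have h2 : C z₁ < C (z₁ + 1) := lt_of_le_of_lt hz₁le hup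
    linarith
  -- zero point and cut
  obtain ⟨y₀, hy₀, hNy₀⟩ := exists_zero s t hs ht z₁ hcomb
  obtain ⟨σ, hσ⟩ := cut_lemma s t hs ht y₀ hy₀
  have hNy₀' : N y₀ = -z₁ := hNy₀
  have hcut : cost σ ≤ C z₁ := by
    refine hσ.trans (le_of_eq ?_)
    apply intervalIntegral.integral_congr
    intro y _
    show |(∑ i, (stp (s i) y - stp (t i) y)) - ∑ i, (stp (s i) y₀ - stp (t i) y₀)|
      = |((N y : ℤ) : ℝ) + (z₁ : ℝ)|
    rw [← hNr y, ← hNr y₀, hNy₀']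
    congr 1
    push_cast
    ring
  -- conclusion
  have hNE : Nonempty (Equiv.Perm (Fin M)) := ⟨1⟩
  apply le_antisymm
  · apply le_ciInf
    intro z
    calc (⨅ σ', cost σ') ≤ cost σ :=
          ciInf_le ⟨0, by rintro x ⟨σ', rfl⟩; exact cost_nonneg σ'⟩ σ
      _ ≤ C z₁ := hcut
      _ ≤ C z := hz₁min z
  · apply le_ciInf
    intro σ'
    obtain ⟨z, hz⟩ := dir1 M s t hs ht σ'
    calc (⨅ z', C z') ≤ C z :=
          ciInf_le ⟨0, by rintro x ⟨z', rfl⟩; exact hC_nonneg z'⟩ z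
      _ ≤ cost σ' := hz
end

section
/- Let M ≥ 1 and let s, t : Fin M → ℝ be nondecreasing tuples of points in [0, 2π) (i ≤ j implies s(i) ≤ s(j) and t(i) ≤ t(j)), with circle distance d(x₁, x₂) = min(|x₁ − x₂|, 2π − |x₁ − x₂|). Then some circular shift permutation is optimal: there exists k ∈ Fin M such that the permutation σ_k defined by σ_k(i) = i + k (addition in Fin M, i.e., modulo M) satisfies ∑_{i} d(s(i), t(σ_k(i))) ≤ ∑_{i} d(s(i), t(σ(i))) for every permutation σ of Fin M. -/
open Finset Real

/-- exchange inequality on the line -/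
lemma cso_exch {a b u v : ℝ} (hab : a ≤ b) (huv : u ≤ v) :
    |a - u| + |b - v| ≤ |a - v| + |b - u| := by
  rcases abs_cases (a - u) with ⟨h1, h1'⟩ | ⟨h1, h1'⟩ <;>
  rcases abs_cases (b - v) with ⟨h2, h2'⟩ | ⟨h2, h2'⟩ <;>
  rcases abs_cases (a - v) with ⟨h3, h3'⟩ | ⟨h3, h3'⟩ <;>
  rcases abs_cases (b - u) with ⟨h4, h4'⟩ | ⟨h4, h4'⟩ <;>
  linarith

lemma cso_sum_pair_key {β : Type*} [AddCommMonoid β] {M : ℕ} (f g : Fin M → β) {p q : Fin M}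
    (hpq : p ≠ q) (hoff : ∀ i, i ≠ p → i ≠ q → g i = f i) :
    ∑ i, g i + (f p + f q) = ∑ i, f i + (g p + g q) := by
  classical
  have hq : q ∈ (univ : Finset (Fin M)).erase p := by
    rw [Finset.mem_erase]; exact ⟨hpq.symm, mem_univ q⟩
  have e1 : ∑ i, g i = g p + (g q + ∑ i ∈ ((univ : Finset (Fin M)).erase p).erase q, g i) := by
    rw [Finset.add_sum_erase _ g hq, Finset.add_sum_erase _ g (mem_univ p)]
  have e2 : ∑ i, f i = f p + (f q + ∑ i ∈ ((univ : Finset (Fin M)).erase p).erase q, f i) := by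
    rw [Finset.add_sum_erase _ f hq, Finset.add_sum_erase _ f (mem_univ p)]
  have e3 : ∑ i ∈ ((univ : Finset (Fin M)).erase p).erase q, g i
      = ∑ i ∈ ((univ : Finset (Fin M)).erase p).erase q, f i := by
    apply Finset.sum_congr rfl
    intro i hi
    rw [Finset.mem_erase, Finset.mem_erase] at hi
    exact hoff i hi.2.1 hi.1
  rw [e1, e2, e3]; abel

lemma cso_sum_pair_le {M : ℕ} (f g : Fin M → ℝ) {p q : Fin M} (hpq : p ≠ q)
    (hoff : ∀ i, i ≠ p → i ≠ q → g i = f i) (h : g p + g q ≤ f p + f q) :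
    ∑ i, g i ≤ ∑ i, f i := by
  have := cso_sum_pair_key f g hpq hoff; linarith

lemma cso_sum_pair_lt {M : ℕ} (f g : Fin M → ℝ) {p q : Fin M} (hpq : p ≠ q)
    (hoff : ∀ i, i ≠ p → i ≠ q → g i = f i) (h : g p + g q < f p + f q) :
    ∑ i, g i < ∑ i, f i := by
  have := cso_sum_pair_key f g hpq hoff; linarith

lemma cso_sum_pair_lt_nat {M : ℕ} (f g : Fin M → ℕ) {p q : Fin M} (hpq : p ≠ q)
    (hoff : ∀ i, i ≠ p → i ≠ q → g i = f i) (h : g p + g q < f p + f q) :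
    ∑ i, g i < ∑ i, f i := by
  have := cso_sum_pair_key f g hpq hoff; omega

lemma cso_sm_le_apply {M : ℕ} {f : Fin M → Fin M} (h : StrictMono f) :
    ∀ i : Fin M, i.val ≤ (f i).val := by
  have key : ∀ N : ℕ, ∀ i : Fin M, i.val ≤ N → i.val ≤ (f i).val := by
    intro N
    induction N with
    | zero => intro i hi; omega
    | succ N ih =>
      intro i hi
      by_cases hle : i.val ≤ N
      · exact ih i hle
      · have hN : i.val = N + 1 := by omega
        have hNM : N < M := by have := i.isLt; omega
        have hj : (⟨N, hNM⟩ : Fin M) < i := by rw [Fin.lt_def]; simpa using by omega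
        have h1 := ih ⟨N, hNM⟩ (le_refl N)
        have h2 := h hj
        rw [Fin.lt_def] at h2
        simp only [Fin.val_mk] at h1 h2 ⊢
        omega
  exact fun i => key i.val i le_rfl

lemma cso_sm_perm_id {M : ℕ} (ρ : Equiv.Perm (Fin M)) (h : StrictMono (ρ : Fin M → Fin M)) :
    ∀ i, ρ i = i := by
  have hinv : StrictMono (ρ.symm : Fin M → Fin M) := by
    intro a b hab
    rcases lt_trichotomy (ρ.symm a) (ρ.symm b) with h' | h' | h'
    · exact h'
    · exfalso
      have : a = b := by
        conv_lhs => rw [← ρ.apply_symm_apply a]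
        conv_rhs => rw [← ρ.apply_symm_apply b]
        rw [h']
      exact absurd this (ne_of_lt hab)
    · exfalso
      have := h h'
      rw [ρ.apply_symm_apply, ρ.apply_symm_apply] at this
      exact lt_irrefl _ (hab.trans this)
  intro i
  have h1 := cso_sm_le_apply h i
  have h2 := cso_sm_le_apply hinv (ρ i)
  rw [ρ.symm_apply_apply] at h2
  exact Fin.ext (le_antisymm h2 h1)

/-- sorted-to-sorted matching is optimal on the line -/
lemma cso_sorted_opt {M : ℕ} (s u : Fin M → ℝ) (hs : Monotone s) (hu : Monotone u)
    (ρ : Equiv.Perm (Fin M)) : ∑ i, |s i - u i| ≤ ∑ i, |s i - u (ρ i)| := by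
  classical
  set K : Equiv.Perm (Fin M) → ℕ := fun τ => ∑ i, i.val * (M - (τ i).val) with hK
  suffices H : ∀ N : ℕ, ∀ τ : Equiv.Perm (Fin M), K τ < N →
      ∑ i, |s i - u i| ≤ ∑ i, |s i - u (τ i)| from H (K ρ + 1) ρ (Nat.lt_succ_self _)
  intro N
  induction N with
  | zero => intro τ h; exact absurd h (Nat.not_lt_zero _)
  | succ N ih =>
    intro τ hτ
    by_cases hmono : ∀ a b : Fin M, a < b → τ a < τ b
    · have hid : ∀ i, τ i = i := cso_sm_perm_id τ (fun a b hab => hmono a b hab)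
      apply le_of_eq
      apply Finset.sum_congr rfl
      intro i _
      rw [hid i]
    · push_neg at hmono
      obtain ⟨a, b, hab, hba⟩ := hmono
      have hne : τ b < τ a := by
        rcases lt_or_eq_of_le hba with h' | h'
        · exact h'
        · exact absurd (τ.injective h') (ne_of_lt hab).symm
      set τ' := τ * Equiv.swap a b with hτ'def
      have hτ'a : τ' a = τ b := by
        simp [hτ'def, Equiv.Perm.mul_apply, Equiv.swap_apply_left]
      have hτ'b : τ' b = τ a := by
        simp [hτ'def, Equiv.Perm.mul_apply, Equiv.swap_apply_right]
      have hτ'off : ∀ i, i ≠ a → i ≠ b → τ' i = τ i := fun i hia hib => by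
        simp [hτ'def, Equiv.Perm.mul_apply, Equiv.swap_apply_of_ne_of_ne hia hib]
      have hKlt : K τ' < K τ := by
        apply cso_sum_pair_lt_nat (p := a) (q := b)
          (fun i => i.val * (M - (τ i).val)) (fun i => i.val * (M - (τ' i).val)) (ne_of_lt hab)
        · intro i hia hib; rw [hτ'off i hia hib]
        · rw [hτ'a, hτ'b]
          have hp1 : (τ a).val < M := (τ a).isLt
          have hp2 : (τ b).val < (τ a).val := hne
          have habv : a.val < b.val := hab
          have hA : M - (τ b).val = (M - (τ a).val) + ((τ a).val - (τ b).val) := by omega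
          rw [hA, Nat.mul_add, Nat.mul_add]
          have key : a.val * ((τ a).val - (τ b).val) < b.val * ((τ a).val - (τ b).val) :=
            Nat.mul_lt_mul_of_lt_of_le habv (le_refl _) (by omega)
          linarith
      have hcost : ∑ i, |s i - u (τ' i)| ≤ ∑ i, |s i - u (τ i)| := by
        apply cso_sum_pair_le (p := a) (q := b)
          (fun i => |s i - u (τ i)|) (fun i => |s i - u (τ' i)|) (ne_of_lt hab)
        · intro i hia hib; rw [hτ'off i hia hib]
        · rw [hτ'a, hτ'b]
          exact cso_exch (hs (le_of_lt hab)) (hu (le_of_lt hne))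
      exact le_trans (ih τ' (by omega)) hcost
noncomputable def cso_ee (v : Fin 3) : ℝ := (v.val : ℝ) - 1

lemma cso_ee0 : cso_ee 0 = -1 := by norm_num [cso_ee]
lemma cso_ee1 : cso_ee 1 = 0 := by norm_num [cso_ee]
lemma cso_ee2 : cso_ee 2 = 1 := by norm_num [cso_ee]

lemma cso_lift_ge {c x y : ℝ} (hx : 0 ≤ x) (hxc : x < c) (hy : 0 ≤ y) (hyc : y < c) (v : Fin 3) :
    min |x - y| (c - |x - y|) ≤ |x - (y + c * cso_ee v)| := by
  have h3 : v = 0 ∨ v = 1 ∨ v = 2 := by revert v; decide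
  rcases h3 with rfl | rfl | rfl
  · rw [cso_ee0, show x - (y + c * (-1)) = x - y + c from by ring]
    rcases le_total x y with h | h
    · rw [abs_of_nonpos (by linarith : x - y ≤ 0), abs_of_nonneg (by linarith : (0:ℝ) ≤ x - y + c)]
      linarith [min_le_right (-(x - y)) (c - -(x - y))]
    · rw [abs_of_nonneg (by linarith : (0:ℝ) ≤ x - y), abs_of_nonneg (by linarith : (0:ℝ) ≤ x - y + c)]
      linarith [min_le_left (x - y) (c - (x - y))]
  · rw [cso_ee1, show x - (y + c * 0) = x - y from by ring]
    exact min_le_left _ _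
  · rw [cso_ee2, show x - (y + c * 1) = x - y - c from by ring]
    rcases le_total x y with h | h
    · rw [abs_of_nonpos (by linarith : x - y ≤ 0), abs_of_nonpos (by linarith : x - y - c ≤ 0)]
      linarith [min_le_left (-(x - y)) (c - -(x - y))]
    · rw [abs_of_nonneg (by linarith : (0:ℝ) ≤ x - y), abs_of_nonpos (by linarith : x - y - c ≤ 0)]
      linarith [min_le_right (x - y) (c - (x - y))]

lemma cso_lift_ex {c x y : ℝ} (hx : 0 ≤ x) (hxc : x < c) (hy : 0 ≤ y) (hyc : y < c) :
    ∃ v : Fin 3, min |x - y| (c - |x - y|) = |x - (y + c * cso_ee v)| := by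
  rcases le_total |x - y| (c - |x - y|) with h | h
  · refine ⟨1, ?_⟩
    rw [min_eq_left h, cso_ee1, show x - (y + c * 0) = x - y from by ring]
  · rcases le_total x y with h2 | h2
    · refine ⟨0, ?_⟩
      rw [min_eq_right h, cso_ee0, show x - (y + c * (-1)) = x - y + c from by ring,
        abs_of_nonpos (by linarith : x - y ≤ 0), abs_of_nonneg (by linarith : (0:ℝ) ≤ x - y + c)]
      ring
    · refine ⟨2, ?_⟩
      rw [min_eq_right h, cso_ee2, show x - (y + c * 1) = x - y - c from by ring,
        abs_of_nonneg (by linarith : (0:ℝ) ≤ x - y), abs_of_nonpos (by linarith : x - y - c ≤ 0)]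
      ring

def cso_psi {M : ℕ} (m : Fin M) (v : Fin 3) : ℕ :=
  (if v = 0 then M - 1 - m.val else 0) + (if v = 2 then m.val else 0)

lemma cso_psi0 {M : ℕ} (m : Fin M) : cso_psi m 0 = M - 1 - m.val := by norm_num [cso_psi, Fin.ext_iff]
lemma cso_psi1 {M : ℕ} (m : Fin M) : cso_psi m 1 = 0 := by norm_num [cso_psi, Fin.ext_iff]
lemma cso_psi2 {M : ℕ} (m : Fin M) : cso_psi m 2 = m.val := by norm_num [cso_psi, Fin.ext_iff]

lemma cso_psiS1 {M : ℕ} (n : Fin M → Fin 3) {j l : Fin M} (hjl : j < l) (hnj : n j = 0)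
    (hnl : n l ≠ 0) :
    ∑ m, cso_psi m (n (Equiv.swap j l m)) < ∑ m, cso_psi m (n m) := by
  apply cso_sum_pair_lt_nat (p := j) (q := l)
    (fun m => cso_psi m (n m)) (fun m => cso_psi m (n (Equiv.swap j l m))) (ne_of_lt hjl)
  · intro i hij hil; rw [Equiv.swap_apply_of_ne_of_ne hij hil]
  · rw [Equiv.swap_apply_left, Equiv.swap_apply_right, hnj]
    have hlM := l.isLt
    have hjl' : j.val < l.val := hjl
    have h3 : n l = 1 ∨ n l = 2 := by
      have : ∀ v : Fin 3, v ≠ 0 → v = 1 ∨ v = 2 := by decide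
      exact this _ hnl
    rcases h3 with h | h <;> rw [h]
    · rw [cso_psi1, cso_psi0, cso_psi0]; omega
    · rw [cso_psi2, cso_psi0, cso_psi0, cso_psi2]; omega

lemma cso_psiS2 {M : ℕ} (n : Fin M → Fin 3) {j l : Fin M} (hjl : j < l) (hnl : n l = 2)
    (hnj : n j ≠ 2) :
    ∑ m, cso_psi m (n (Equiv.swap j l m)) < ∑ m, cso_psi m (n m) := by
  apply cso_sum_pair_lt_nat (p := j) (q := l)
    (fun m => cso_psi m (n m)) (fun m => cso_psi m (n (Equiv.swap j l m))) (ne_of_lt hjl)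
  · intro i hij hil; rw [Equiv.swap_apply_of_ne_of_ne hij hil]
  · rw [Equiv.swap_apply_left, Equiv.swap_apply_right, hnl]
    have hlM := l.isLt
    have hjl' : j.val < l.val := hjl
    have h3 : n j = 0 ∨ n j = 1 := by
      have : ∀ v : Fin 3, v ≠ 2 → v = 0 ∨ v = 1 := by decide
      exact this _ hnj
    rcases h3 with h | h <;> rw [h]
    · rw [cso_psi2, cso_psi0, cso_psi0, cso_psi2]; omega
    · rw [cso_psi2, cso_psi1, cso_psi1, cso_psi2]; omega

lemma cso_upclosed_char {M : ℕ} (S : Finset (Fin M)) (hup : ∀ ⦃j l : Fin M⦄, j ∈ S → j ≤ l → l ∈ S)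
    (j : Fin M) : j ∈ S ↔ M - S.card ≤ j.val := by
  constructor
  · intro hj
    have hsub : Finset.Ici j ⊆ S := fun l hl => hup hj (Finset.mem_Ici.mp hl)
    have h1 := Finset.card_le_card hsub
    rw [Fin.card_Ici] at h1
    have := j.isLt; omega
  · intro hj
    by_contra hjS
    have hsub : S ⊆ Finset.Ioi j := by
      intro l hl
      rw [Finset.mem_Ioi]
      rcases lt_or_ge j l with h | h
      · exact h
      · exact absurd (hup hl h) hjS
    have h1 := Finset.card_le_card hsub
    rw [Fin.card_Ioi] at h1
    have := j.isLt; omega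

lemma cso_downclosed_char {M : ℕ} (S : Finset (Fin M))
    (hdown : ∀ ⦃j l : Fin M⦄, l ∈ S → j ≤ l → j ∈ S)
    (j : Fin M) : j ∈ S ↔ j.val < S.card := by
  constructor
  · intro hj
    have hsub : Finset.Iic j ⊆ S := fun l hl => hdown hj (Finset.mem_Iic.mp hl)
    have h1 := Finset.card_le_card hsub
    rw [Fin.card_Iic] at h1
    omega
  · intro hj
    by_contra hjS
    have hsub : S ⊆ Finset.Iio j := by
      intro l hl
      rw [Finset.mem_Iio]
      rcases lt_or_ge l j with h | h
      · exact h
      · exact absurd (hdown hl h) hjS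
    have h1 := Finset.card_le_card hsub
    rw [Fin.card_Iio] at h1
    omega

lemma cso_movePhi_le {M : ℕ} (s : Fin M → ℝ) (T T' : Fin M → ℝ) (σ : Equiv.Perm (Fin M))
    {j l : Fin M} (hjl : j ≠ l)
    (hoff : ∀ m, m ≠ j → m ≠ l → T' m = T m)
    (hpair : |s (σ.symm j) - T' l| + |s (σ.symm l) - T' j| ≤
      |s (σ.symm j) - T j| + |s (σ.symm l) - T l|) :
    ∑ i, |s i - T' ((Equiv.swap j l * σ) i)| ≤ ∑ i, |s i - T (σ i)| := by
  apply cso_sum_pair_le (p := σ.symm j) (q := σ.symm l)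
    (fun i => |s i - T (σ i)|) (fun i => |s i - T' ((Equiv.swap j l * σ) i)|)
    (fun h => hjl (σ.symm.injective h))
  · intro i hij hil
    have h1 : σ i ≠ j := fun h => hij (by rw [← h, Equiv.symm_apply_apply])
    have h2 : σ i ≠ l := fun h => hil (by rw [← h, Equiv.symm_apply_apply])
    rw [Equiv.Perm.mul_apply, Equiv.swap_apply_of_ne_of_ne h1 h2, hoff _ h1 h2]
  · rw [Equiv.Perm.mul_apply, Equiv.Perm.mul_apply, Equiv.apply_symm_apply,
      Equiv.apply_symm_apply, Equiv.swap_apply_left, Equiv.swap_apply_right]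
    exact hpair

lemma cso_movePhi_lt {M : ℕ} (s : Fin M → ℝ) (T T' : Fin M → ℝ) (σ : Equiv.Perm (Fin M))
    {j l : Fin M} (hjl : j ≠ l)
    (hoff : ∀ m, m ≠ j → m ≠ l → T' m = T m)
    (hpair : |s (σ.symm j) - T' l| + |s (σ.symm l) - T' j| <
      |s (σ.symm j) - T j| + |s (σ.symm l) - T l|) :
    ∑ i, |s i - T' ((Equiv.swap j l * σ) i)| < ∑ i, |s i - T (σ i)| := by
  apply cso_sum_pair_lt (p := σ.symm j) (q := σ.symm l)
    (fun i => |s i - T (σ i)|) (fun i => |s i - T' ((Equiv.swap j l * σ) i)|)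
    (fun h => hjl (σ.symm.injective h))
  · intro i hij hil
    have h1 : σ i ≠ j := fun h => hij (by rw [← h, Equiv.symm_apply_apply])
    have h2 : σ i ≠ l := fun h => hil (by rw [← h, Equiv.symm_apply_apply])
    rw [Equiv.Perm.mul_apply, Equiv.swap_apply_of_ne_of_ne h1 h2, hoff _ h1 h2]
  · rw [Equiv.Perm.mul_apply, Equiv.Perm.mul_apply, Equiv.apply_symm_apply,
      Equiv.apply_symm_apply, Equiv.swap_apply_left, Equiv.swap_apply_right]
    exact hpair
lemma cso_mono_case1 {M : ℕ} {c : ℝ} (t : Fin M → ℝ) (ht_mono : Monotone t)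
    (ht0 : ∀ i, 0 ≤ t i) (ht1 : ∀ i, t i < c) (n : Fin M → Fin 3) (k : Fin M)
    (hchar : ∀ j : Fin M, n j = 0 ↔ k.val ≤ j.val) (hC : ∀ m, n m ≠ 2) :
    Monotone (fun i : Fin M => t (i + k) + c * cso_ee (n (i + k))) := by
  have Hcase : ∀ q : Fin M,
      (n (q + k) = 0 ∧ (q + k).val = q.val + k.val ∧ q.val + k.val < M) ∨
      (n (q + k) = 1 ∧ (q + k).val = q.val + k.val - M ∧ M ≤ q.val + k.val) := by
    intro q
    rcases lt_or_ge (q.val + k.val) M with h | h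
    · left
      have hv : (q + k).val = q.val + k.val := by rw [Fin.val_add, Nat.mod_eq_of_lt h]
      refine ⟨(hchar _).mpr (by omega), hv, h⟩
    · right
      have hv : (q + k).val = q.val + k.val - M := by
        rw [Fin.val_add, Nat.mod_eq_sub_mod h, Nat.mod_eq_of_lt (by have := q.isLt; omega)]
      have h0 : n (q + k) ≠ 0 := by
        intro h0
        have := (hchar _).mp h0
        rw [hv] at this
        have := q.isLt; have := k.isLt; omega
      have h1 : n (q + k) = 1 := by
        have : ∀ v : Fin 3, v ≠ 0 → v ≠ 2 → v = 1 := by decide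
        exact this _ h0 (hC _)
      exact ⟨h1, hv, h⟩
  intro i i' hii'
  have hii : i.val ≤ i'.val := hii'
  simp only []
  rcases Hcase i with ⟨h1, hv1, hb1⟩ | ⟨h1, hv1, hb1⟩ <;>
    rcases Hcase i' with ⟨h1', hv1', hb1'⟩ | ⟨h1', hv1', hb1'⟩
  · rw [h1, h1', cso_ee0]
    have hle : (i + k) ≤ (i' + k) := by rw [Fin.le_def, hv1, hv1']; omega
    have := ht_mono hle; linarith
  · rw [h1, h1', cso_ee0, cso_ee1]
    have hb := ht1 (i + k)
    have hb' := ht0 (i' + k)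
    linarith
  · exfalso; omega
  · rw [h1, h1', cso_ee1]
    have hle : (i + k) ≤ (i' + k) := by rw [Fin.le_def, hv1, hv1']; omega
    have := ht_mono hle; linarith

lemma cso_mono_case2 {M : ℕ} {c : ℝ} (t : Fin M → ℝ) (ht_mono : Monotone t)
    (ht0 : ∀ i, 0 ≤ t i) (ht1 : ∀ i, t i < c) (n : Fin M → Fin 3) (k : Fin M)
    (hchar : ∀ j : Fin M, n j = 2 ↔ j.val < k.val) (hA : ∀ m, n m ≠ 0) :
    Monotone (fun i : Fin M => t (i + k) + c * cso_ee (n (i + k))) := by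
  have Hcase : ∀ q : Fin M,
      (n (q + k) = 1 ∧ (q + k).val = q.val + k.val ∧ q.val + k.val < M) ∨
      (n (q + k) = 2 ∧ (q + k).val = q.val + k.val - M ∧ M ≤ q.val + k.val) := by
    intro q
    rcases lt_or_ge (q.val + k.val) M with h | h
    · left
      have hv : (q + k).val = q.val + k.val := by rw [Fin.val_add, Nat.mod_eq_of_lt h]
      have h2 : n (q + k) ≠ 2 := by
        intro h2
        have := (hchar _).mp h2
        rw [hv] at this
        omega
      have h1 : n (q + k) = 1 := by
        have : ∀ v : Fin 3, v ≠ 0 → v ≠ 2 → v = 1 := by decide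
        exact this _ (hA _) h2
      exact ⟨h1, hv, h⟩
    · right
      have hv : (q + k).val = q.val + k.val - M := by
        rw [Fin.val_add, Nat.mod_eq_sub_mod h, Nat.mod_eq_of_lt (by have := q.isLt; omega)]
      have h2 : n (q + k) = 2 := by
        apply (hchar _).mpr
        rw [hv]
        have := q.isLt; omega
      exact ⟨h2, hv, h⟩
  intro i i' hii'
  have hii : i.val ≤ i'.val := hii'
  simp only []
  rcases Hcase i with ⟨h1, hv1, hb1⟩ | ⟨h1, hv1, hb1⟩ <;>
    rcases Hcase i' with ⟨h1', hv1', hb1'⟩ | ⟨h1', hv1', hb1'⟩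
  · rw [h1, h1', cso_ee1]
    have hle : (i + k) ≤ (i' + k) := by rw [Fin.le_def, hv1, hv1']; omega
    have := ht_mono hle; linarith
  · rw [h1, h1', cso_ee1, cso_ee2]
    have hb := ht1 (i + k)
    have hb' := ht0 (i' + k)
    linarith
  · exfalso; omega
  · rw [h1, h1', cso_ee2]
    have hle : (i + k) ≤ (i' + k) := by rw [Fin.le_def, hv1, hv1']; omega
    have := ht_mono hle; linarith
/-- On the circle, for sorted tuples `s` and `t`, some circular shift permutation
`i ↦ i + k` (addition modulo `M`) is an optimal matching. -/
theorem circle_shift_optimal (M : ℕ) (hM : 1 ≤ M) (s t : Fin M → ℝ)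
    (hs_mono : Monotone s) (ht_mono : Monotone t)
    (hs : ∀ i, s i ∈ Set.Ico 0 (2 * π)) (ht : ∀ i, t i ∈ Set.Ico 0 (2 * π)) :
    ∃ k : Fin M, ∀ σ : Equiv.Perm (Fin M),
      ∑ i, min |s i - t (i + k)| (2 * π - |s i - t (i + k)|) ≤
        ∑ i, min |s i - t (σ i)| (2 * π - |s i - t (σ i)|) := by
  classical
  have hMz : NeZero M := ⟨by omega⟩
  have hπ := Real.pi_pos
  set c : ℝ := 2 * π with hcdef
  have hc0 : (0:ℝ) < c := by rw [hcdef]; linarith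
  have hs0 : ∀ i, 0 ≤ s i := fun i => (hs i).1
  have hs1 : ∀ i, s i < c := fun i => (hs i).2
  have ht0 : ∀ i, 0 ≤ t i := fun i => (ht i).1
  have ht1 : ∀ i, t i < c := fun i => (ht i).2
  set T : (Fin M → Fin 3) → Fin M → ℝ := fun n m => t m + c * cso_ee (n m) with hT
  set Φ : Equiv.Perm (Fin M) × (Fin M → Fin 3) → ℝ :=
    fun p => ∑ i, |s i - T p.2 (p.1 i)| with hΦ
  set Ψ : Equiv.Perm (Fin M) × (Fin M → Fin 3) → ℕ := fun p => ∑ m, cso_psi m (p.2 m) with hΨ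
  obtain ⟨p₀, -, hp₀⟩ := Finset.exists_min_image Finset.univ Φ Finset.univ_nonempty
  obtain ⟨p', hp'mem, hp'Ψ⟩ := Finset.exists_min_image
      (Finset.univ.filter fun p => Φ p ≤ Φ p₀) Ψ ⟨p₀, by simp⟩
  rw [Finset.mem_filter] at hp'mem
  have m1 : ∀ q, Φ p' ≤ Φ q := fun q => le_trans hp'mem.2 (hp₀ q (Finset.mem_univ q))
  have m2 : ∀ q, Φ q ≤ Φ p' → Ψ p' ≤ Ψ q := fun q hq =>
    hp'Ψ q (Finset.mem_filter.mpr ⟨Finset.mem_univ q, le_trans hq hp'mem.2⟩)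
  set σ₀ : Equiv.Perm (Fin M) := p'.1 with hσ₀
  set n₀ : Fin M → Fin 3 := p'.2 with hn₀
  have hp'eq : p' = (σ₀, n₀) := rfl
  -- F1 : lifts -1 and +1 cannot coexist
  have F1 : ∀ j l : Fin M, n₀ j = 0 → n₀ l = 2 → False := by
    intro j l hj hl
    have hjl : j ≠ l := fun h => by rw [h, hl] at hj; exact absurd hj (by decide)
    set n' : Fin M → Fin 3 := fun m => if m = j then 1 else if m = l then 1 else n₀ m with hn'
    have hlt : Φ (Equiv.swap j l * σ₀, n') < Φ (σ₀, n₀) := by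
      simp only [hΦ]
      apply cso_movePhi_lt s (T n₀) (T n') σ₀ hjl
      · intro m hmj hml; simp only [hT, hn', if_neg hmj, if_neg hml]
      · have hlj : l ≠ j := Ne.symm hjl
        have e1 : T n' l = t l := by simp [hT, hn', hlj, cso_ee1]
        have e2 : T n' j = t j := by simp [hT, hn', cso_ee1]
        have e3 : T n₀ j = t j + c * (-1) := by simp only [hT, hj, cso_ee0]
        have e4 : T n₀ l = t l + c * 1 := by simp only [hT, hl, cso_ee2]
        rw [e1, e2, e3, e4]
        have hx0 := hs0 (σ₀.symm j); have hx1 := hs1 (σ₀.symm j)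
        have hy0 := hs0 (σ₀.symm l); have hy1 := hs1 (σ₀.symm l)
        have htj0 := ht0 j; have htj1 := ht1 j
        have htl0 := ht0 l; have htl1 := ht1 l
        rw [abs_of_nonneg (by linarith : (0:ℝ) ≤ s (σ₀.symm j) - (t j + c * (-1))),
          abs_of_nonpos (by linarith : s (σ₀.symm l) - (t l + c * 1) ≤ 0)]
        rcases abs_cases (s (σ₀.symm j) - t l) with ⟨h1, _⟩ | ⟨h1, _⟩ <;>
          rcases abs_cases (s (σ₀.symm l) - t j) with ⟨h2, _⟩ | ⟨h2, _⟩ <;> linarith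
    exact absurd (m1 _) (not_le.mpr hlt)
  -- F2 : the set of -1 lifts is upward closed
  have F2 : ∀ j l : Fin M, j < l → n₀ j = 0 → n₀ l = 0 := by
    intro j l hjl hj
    by_contra hl
    set n' : Fin M → Fin 3 := fun m => n₀ (Equiv.swap j l m) with hn'
    have hΦle : Φ (Equiv.swap j l * σ₀, n') ≤ Φ (σ₀, n₀) := by
      simp only [hΦ]
      apply cso_movePhi_le s (T n₀) (T n') σ₀ (ne_of_lt hjl)
      · intro m hmj hml
        simp only [hT, hn', Equiv.swap_apply_of_ne_of_ne hmj hml]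
      · have e1 : T n' l = t l + c * (-1) := by
          simp only [hT, hn', Equiv.swap_apply_right, hj, cso_ee0]
        have e2 : T n' j = t j + c * cso_ee (n₀ l) := by
          simp only [hT, hn', Equiv.swap_apply_left]
        have e3 : T n₀ j = t j + c * (-1) := by simp only [hT, hj, cso_ee0]
        have e4 : T n₀ l = t l + c * cso_ee (n₀ l) := by simp only [hT]
        rw [e1, e2, e3, e4]
        have hx0 := hs0 (σ₀.symm j)
        have htjl : t j ≤ t l := ht_mono (le_of_lt hjl)
        have htl1 := ht1 l
        have r1 : |s (σ₀.symm j) - (t l + c * (-1))| = s (σ₀.symm j) - t l + c := by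
          rw [abs_of_nonneg (by linarith)]; ring
        have r2 : |s (σ₀.symm j) - (t j + c * (-1))| = s (σ₀.symm j) - t j + c := by
          rw [abs_of_nonneg (by linarith)]; ring
        have r3 := abs_sub_abs_le_abs_sub (s (σ₀.symm l) - (t j + c * cso_ee (n₀ l)))
          (s (σ₀.symm l) - (t l + c * cso_ee (n₀ l)))
        have r4 : |(s (σ₀.symm l) - (t j + c * cso_ee (n₀ l))) -
            (s (σ₀.symm l) - (t l + c * cso_ee (n₀ l)))| = t l - t j := by
          rw [show (s (σ₀.symm l) - (t j + c * cso_ee (n₀ l))) -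
            (s (σ₀.symm l) - (t l + c * cso_ee (n₀ l))) = t l - t j from by ring,
            abs_of_nonneg (by linarith)]
        linarith
    have hΨlt : Ψ (Equiv.swap j l * σ₀, n') < Ψ (σ₀, n₀) := by
      simp only [hΨ]
      exact cso_psiS1 n₀ hjl hj hl
    exact absurd (m2 _ hΦle) (not_le.mpr hΨlt)
  -- F3 : the set of +1 lifts is downward closed
  have F3 : ∀ j l : Fin M, j < l → n₀ l = 2 → n₀ j = 2 := by
    intro j l hjl hl
    by_contra hj
    set n' : Fin M → Fin 3 := fun m => n₀ (Equiv.swap j l m) with hn'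
    have hΦle : Φ (Equiv.swap j l * σ₀, n') ≤ Φ (σ₀, n₀) := by
      simp only [hΦ]
      apply cso_movePhi_le s (T n₀) (T n') σ₀ (ne_of_lt hjl)
      · intro m hmj hml
        simp only [hT, hn', Equiv.swap_apply_of_ne_of_ne hmj hml]
      · have e1 : T n' l = t l + c * cso_ee (n₀ j) := by
          simp only [hT, hn', Equiv.swap_apply_right]
        have e2 : T n' j = t j + c * 1 := by
          simp only [hT, hn', Equiv.swap_apply_left, hl, cso_ee2]
        have e3 : T n₀ j = t j + c * cso_ee (n₀ j) := by simp only [hT]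
        have e4 : T n₀ l = t l + c * 1 := by simp only [hT, hl, cso_ee2]
        rw [e1, e2, e3, e4]
        have hy1 := hs1 (σ₀.symm l)
        have htjl : t j ≤ t l := ht_mono (le_of_lt hjl)
        have htj0 := ht0 j
        have r1 : |s (σ₀.symm l) - (t j + c * 1)| = t j + c - s (σ₀.symm l) := by
          rw [abs_of_nonpos (by linarith)]; ring
        have r2 : |s (σ₀.symm l) - (t l + c * 1)| = t l + c - s (σ₀.symm l) := by
          rw [abs_of_nonpos (by linarith)]; ring
        have r3 := abs_sub_abs_le_abs_sub (s (σ₀.symm j) - (t l + c * cso_ee (n₀ j)))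
          (s (σ₀.symm j) - (t j + c * cso_ee (n₀ j)))
        have r4 : |(s (σ₀.symm j) - (t l + c * cso_ee (n₀ j))) -
            (s (σ₀.symm j) - (t j + c * cso_ee (n₀ j)))| = t l - t j := by
          rw [show (s (σ₀.symm j) - (t l + c * cso_ee (n₀ j))) -
            (s (σ₀.symm j) - (t j + c * cso_ee (n₀ j))) = t j - t l from by ring,
            abs_of_nonpos (by linarith), neg_sub]
        linarith
    have hΨlt : Ψ (Equiv.swap j l * σ₀, n') < Ψ (σ₀, n₀) := by
      simp only [hΨ]
      exact cso_psiS2 n₀ hjl hl hj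
    exact absurd (m2 _ hΦle) (not_le.mpr hΨlt)
  -- extract the shift k and monotonicity of the shifted lifted target
  have key : ∃ k : Fin M, Monotone (fun i : Fin M => t (i + k) + c * cso_ee (n₀ (i + k))) := by
    by_cases hA : ∃ m, n₀ m = 0
    · -- the -1 lifts form a suffix; no +1 lifts
      obtain ⟨m₀, hm₀⟩ := hA
      have hC : ∀ m, n₀ m ≠ 2 := fun m hm => F1 _ _ hm₀ hm
      set A : Finset (Fin M) := Finset.univ.filter (fun m => n₀ m = 0) with hAdef
      have hup : ∀ ⦃j l : Fin M⦄, j ∈ A → j ≤ l → l ∈ A := by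
        intro j l hj hjl
        rw [hAdef, Finset.mem_filter] at hj ⊢
        rcases eq_or_lt_of_le hjl with rfl | h
        · exact hj
        · exact ⟨Finset.mem_univ _, F2 j l h hj.2⟩
      have hcard : 1 ≤ A.card := Finset.card_pos.mpr
        ⟨m₀, by rw [hAdef, Finset.mem_filter]; exact ⟨Finset.mem_univ _, hm₀⟩⟩
      have haM : M - A.card < M := by omega
      refine ⟨⟨M - A.card, haM⟩, ?_⟩
      apply cso_mono_case1 t ht_mono ht0 ht1 n₀ _ _ hC
      intro j
      have := cso_upclosed_char A hup j
      rw [hAdef, Finset.mem_filter] at this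
      simpa using this
    · push_neg at hA
      set C : Finset (Fin M) := Finset.univ.filter (fun m => n₀ m = 2) with hCdef
      have hdown : ∀ ⦃j l : Fin M⦄, l ∈ C → j ≤ l → j ∈ C := by
        intro j l hl hjl
        rw [hCdef, Finset.mem_filter] at hl ⊢
        rcases eq_or_lt_of_le hjl with rfl | h
        · exact hl
        · exact ⟨Finset.mem_univ _, F3 j l h hl.2⟩
      have hchar : ∀ j : Fin M, n₀ j = 2 ↔ j.val < C.card := by
        intro j
        have := cso_downclosed_char C hdown j
        rw [hCdef, Finset.mem_filter] at this
        simpa using this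
      by_cases hCM : C.card = M
      · -- all lifts +1 : shift k = 0
        refine ⟨0, ?_⟩
        have hall : ∀ j, n₀ j = 2 := fun j => (hchar j).mpr (by rw [hCM]; exact j.isLt)
        intro i i' hii'
        simp only []
        rw [hall, hall, cso_ee2]
        have : i + 0 ≤ i' + 0 := by simpa using hii'
        have := ht_mono this
        linarith
      · have hCM' : C.card < M := by
          have := Finset.card_le_univ C
          simp only [Finset.card_univ, Fintype.card_fin] at this
          omega
        refine ⟨⟨C.card, hCM'⟩, ?_⟩
        exact cso_mono_case2 t ht_mono ht0 ht1 n₀ _ (fun j => hchar j) hA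
  obtain ⟨k, hu⟩ := key
  refine ⟨k, fun σ => ?_⟩
  have step1 : ∑ i, min |s i - t (i + k)| (c - |s i - t (i + k)|)
      ≤ ∑ i, |s i - T n₀ (i + k)| :=
    Finset.sum_le_sum fun i _ =>
      cso_lift_ge (hs0 i) (hs1 i) (ht0 _) (ht1 _) (n₀ (i + k))
  have step2 : ∑ i, |s i - T n₀ (i + k)| ≤ Φ p' := by
    have h := cso_sorted_opt s (fun i => t (i + k) + c * cso_ee (n₀ (i + k))) hs_mono hu
      (σ₀.trans (Equiv.subRight k))
    calc ∑ i, |s i - T n₀ (i + k)|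
        ≤ ∑ i, |s i - (t ((σ₀.trans (Equiv.subRight k)) i + k) +
            c * cso_ee (n₀ ((σ₀.trans (Equiv.subRight k)) i + k)))| := h
      _ = Φ p' := by
          simp only [hΦ, hp'eq]
          apply Finset.sum_congr rfl
          intro i _
          have hsk : (σ₀.trans (Equiv.subRight k)) i + k = σ₀ i := by
            simp [Equiv.subRight, sub_add_cancel]
          rw [hsk]
  have step3 : Φ p' ≤ ∑ i, min |s i - t (σ i)| (c - |s i - t (σ i)|) := by
    have hex : ∀ j : Fin M, ∃ v : Fin 3,
        min |s (σ.symm j) - t j| (c - |s (σ.symm j) - t j|) = |s (σ.symm j) - (t j + c * cso_ee v)| :=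
      fun j => cso_lift_ex (hs0 _) (hs1 _) (ht0 _) (ht1 _)
    choose nσ hnσ using hex
    have heq : Φ (σ, nσ) = ∑ i, min |s i - t (σ i)| (c - |s i - t (σ i)|) := by
      simp only [hΦ, hT]
      apply Finset.sum_congr rfl
      intro i _
      have h := hnσ (σ i)
      rw [Equiv.symm_apply_apply] at h
      exact h.symm
    rw [← heq]
    exact m1 (σ, nσ)
  exact le_trans step1 (le_trans step2 step3)
end

section
/- Let V and E be finite types with maps tail, head : E → V, let b : E → ℤ, and for each e ∈ E let C_e : ℝ → ℝ be a convex function that is affine on [n, n+1] for every integer n. Call z : E → ℝ feasible if for every vertex u ∈ V, ∑_{e : head(e) = u} (z(e) + b(e)) = ∑_{e : tail(e) = u} z(e). Suppose z* : E → ℝ is feasible and minimizes the total cost ∑_{e} C_e(z(e)) over all feasible z. Then there exists a feasible z' : E → ℝ taking only integer values (for every e, z'(e) ∈ ℤ) with ∑_{e} C_e(z'(e)) = ∑_{e} C_e(z*(e)); in particular, the minimum convex cost flow problem with these data has an integer optimal solution. -/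
/-!
On the unit box `∏ₑ [⌊zstar e⌋, ⌊zstar e⌋ + 1]` the total cost is affine, so the feasible flows in
the box costing no more than `zstar` form a compact polytope of optimal flows; let `z` be an
extreme point of it. The edges where `z` is fractional carry an integral net outflow at every
vertex. If their incidence vectors were linearly independent, there would be fewer of these edges
than vertices they touch, hence a vertex touched by exactly one of them, and the value of `z` on
that edge would be an integer. So some nonzero circulation `d` lives on the fractional edges, and
for small `t` both `z + t • d` and `z - t • d` stay in the box, feasible and, the cost being
affine there, optimal: this contradicts extremality.
-/

open Finset Filter Topology

lemma mem_Ioo_of_mem_Icc_of_notMem_bot {x : ℝ} {n : ℤ} (hx : x ∈ Set.Icc (n : ℝ) (n + 1))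
    (hint : x ∉ (⊥ : Subring ℝ)) : x ∈ Set.Ioo (n : ℝ) (n + 1) :=
  ⟨hx.1.lt_of_ne fun h => hint (h ▸ intCast_mem _ n),
    hx.2.lt_of_ne fun h => hint (h ▸ add_mem (intCast_mem _ n) (one_mem _))⟩

lemma exists_pos_add_smul_mem_pi_Icc {ι : Type*} [Finite ι] {l r z d : ι → ℝ}
    (hz : ∀ i, z i ∈ Set.Icc (l i) (r i)) (hd : ∀ i, d i ≠ 0 → z i ∈ Set.Ioo (l i) (r i)) :
    ∃ t : ℝ, 0 < t ∧ z + t • d ∈ Set.univ.pi (fun i => Set.Icc (l i) (r i)) ∧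
      z - t • d ∈ Set.univ.pi (fun i => Set.Icc (l i) (r i)) := by
  have h : ∀ᶠ t in 𝓝 (0 : ℝ), ∀ i, z i + t * d i ∈ Set.Icc (l i) (r i) := by
    refine eventually_all.2 fun i => ?_
    by_cases hdi : d i = 0
    · simp [hdi, hz i]
    · have hc : ContinuousAt (fun t : ℝ => z i + t * d i) 0 := by fun_prop
      exact (hc.eventually_mem (isOpen_Ioo.mem_nhds (by simpa using hd i hdi))).mono
        fun t ht => Set.Ioo_subset_Icc_self ht
  have h' : ∀ᶠ t in 𝓝 (0 : ℝ), ∀ i, z i + -t * d i ∈ Set.Icc (l i) (r i) :=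
    (continuous_neg.tendsto' 0 0 neg_zero).eventually h
  obtain ⟨t, ⟨h₁, h₂⟩, ht⟩ :=
    (((h.and h').filter_mono nhdsWithin_le_nhds).and (self_mem_nhdsWithin (s := Set.Ioi 0))).exists
  refine ⟨t, ht, fun i _ => ?_, fun i _ => ?_⟩
  · simpa using h₁ i
  · simpa [sub_eq_add_neg] using h₂ i

lemma eq_zero_of_add_mem_of_sub_mem_of_mem_extremePoints {𝕜 M : Type*} [Ring 𝕜]
    [LinearOrder 𝕜] [IsStrictOrderedRing 𝕜] [Invertible (2 : 𝕜)] [AddCommGroup M] [Module 𝕜 M]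
    {A : Set M} {x v : M} (hx : x ∈ A.extremePoints 𝕜) (h₁ : x + v ∈ A) (h₂ : x - v ∈ A) :
    v = 0 := by
  simpa using hx.2 h₁ h₂ (mem_openSegment_add_sub x v)

namespace FlowNetwork

variable {V E : Type*} [DecidableEq V] (tail head : E → V)

def incidence (e : E) : V → ℝ := Pi.single (tail e) 1 - Pi.single (head e) 1

def vertices (F : Finset E) : Finset V := F.image tail ∪ F.image head

def incidentEdges (F : Finset E) (u : V) : Finset E := F.filter fun e => tail e = u ∨ head e = u

variable {tail head}

lemma incidence_apply (e : E) (u : V) :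
    incidence tail head e u = (if tail e = u then 1 else 0) - (if head e = u then 1 else 0) := by
  simp [incidence, Pi.single_apply, eq_comm]

lemma incidence_apply_mem_bot (e : E) (u : V) :
    incidence tail head e u ∈ (⊥ : Subring ℝ) := by
  rw [incidence_apply]
  split_ifs <;> simp

lemma tail_ne_head_of_incidence_ne_zero {e : E} (he : incidence tail head e ≠ 0) :
    tail e ≠ head e := by
  intro h
  simp [incidence, h] at he

lemma tail_mem_vertices {F : Finset E} {e : E} (he : e ∈ F) : tail e ∈ vertices tail head F :=
  mem_union_left _ (mem_image_of_mem _ he)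

lemma head_mem_vertices {F : Finset E} {e : E} (he : e ∈ F) : head e ∈ vertices tail head F :=
  mem_union_right _ (mem_image_of_mem _ he)

lemma card_lt_card_vertices {F : Finset E}
    (hF : LinearIndepOn ℝ (incidence tail head) (F : Set E)) (hne : F.Nonempty) :
    #F < #(vertices tail head F) := by
  classical
  obtain ⟨e₁, he₁⟩ := hne
  set T := vertices tail head F
  -- the incidence vectors of `F` lie in the span of the `𝟙 u - 𝟙 (tail e₁)`, `u ∈ T \ {tail e₁}`
  let ψ : V → V → ℝ := fun u => Pi.single u 1 - Pi.single (tail e₁) 1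
  let W := Submodule.span ℝ (((T.erase (tail e₁)).image ψ : Finset (V → ℝ)) : Set (V → ℝ))
  have hψ : ∀ u ∈ T, ψ u ∈ W := by
    intro u hu
    by_cases h : u = tail e₁
    · simp [ψ, h]
    · exact Submodule.subset_span (mem_image_of_mem ψ (mem_erase.2 ⟨h, hu⟩))
  have hspan : Submodule.span ℝ (Set.range fun e : (F : Set E) => incidence tail head e) ≤ W := by
    rw [Submodule.span_le]
    rintro _ ⟨⟨e, he⟩, rfl⟩
    change incidence tail head e ∈ W
    rw [show incidence tail head e = ψ (tail e) - ψ (head e) by simp [ψ, incidence]]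
    exact W.sub_mem (hψ _ (tail_mem_vertices he)) (hψ _ (head_mem_vertices he))
  calc #F = Module.finrank ℝ (Submodule.span ℝ
        (Set.range fun e : (F : Set E) => incidence tail head e)) := by
        rw [finrank_span_eq_card hF]; simp
    _ ≤ Module.finrank ℝ W := Submodule.finrank_mono hspan
    _ ≤ #((T.erase (tail e₁)).image ψ) := finrank_span_finset_le_card _
    _ ≤ #(T.erase (tail e₁)) := card_image_le
    _ < #T := card_erase_lt_of_mem (tail_mem_vertices he₁)

lemma sum_card_incidentEdges_le (F : Finset E) :
    ∑ u ∈ vertices tail head F, #(incidentEdges tail head F u) ≤ 2 * #F := by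
  classical
  calc ∑ u ∈ vertices tail head F, #(incidentEdges tail head F u)
      ≤ ∑ u ∈ vertices tail head F,
          (#(F.filter fun e => tail e = u) + #(F.filter fun e => head e = u)) :=
        sum_le_sum fun u _ => by rw [incidentEdges, filter_or]; exact card_union_le _ _
    _ = #F + #F := by
        rw [sum_add_distrib, ← card_eq_sum_card_fiberwise fun e => tail_mem_vertices,
          ← card_eq_sum_card_fiberwise fun e => head_mem_vertices]
    _ = 2 * #F := (two_mul _).symm

lemma exists_incidentEdges_eq_singleton {F : Finset E}
    (hF : LinearIndepOn ℝ (incidence tail head) (F : Set E)) (hne : F.Nonempty) :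
    ∃ u e, incidentEdges tail head F u = {e} := by
  have hlt : ∑ u ∈ vertices tail head F, #(incidentEdges tail head F u) <
      ∑ _u ∈ vertices tail head F, 2 := by
    have := card_lt_card_vertices hF hne
    have := sum_card_incidentEdges_le (tail := tail) (head := head) F
    rw [sum_const, smul_eq_mul]
    omega
  obtain ⟨u, hu, hlt⟩ := exists_lt_of_sum_lt hlt
  have hpos : (incidentEdges tail head F u).Nonempty := by
    simp only [vertices, mem_union, mem_image] at hu
    obtain ⟨e, he, rfl⟩ | ⟨e, he, rfl⟩ := hu <;> exact ⟨e, mem_filter.2 ⟨he, by simp⟩⟩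
  exact ⟨u, card_eq_one.1 (by have := hpos.card_pos; omega)⟩

variable [Fintype E]

variable (tail head) in
def netOutflow : (E → ℝ) →ₗ[ℝ] V → ℝ := Fintype.linearCombination ℝ (incidence tail head)

lemma netOutflow_apply (y : E → ℝ) (u : V) :
    netOutflow tail head y u = ∑ e, y e * incidence tail head e u := by
  simp [netOutflow, Fintype.linearCombination_apply]

lemma mem_bot_of_incidentEdges_eq_singleton {y : E → ℝ} {F : Finset E} {u : V} {e₀ : E}
    (hu : netOutflow tail head y u ∈ (⊥ : Subring ℝ)) (hF : ∀ e ∉ F, y e ∈ (⊥ : Subring ℝ))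
    (h : incidentEdges tail head F u = {e₀}) (hloop : tail e₀ ≠ head e₀) :
    y e₀ ∈ (⊥ : Subring ℝ) := by
  classical
  have hinc : ∀ e ≠ e₀, y e * incidence tail head e u ∈ (⊥ : Subring ℝ) := by
    intro e he
    by_cases heF : e ∈ F
    · have hne : ¬(tail e = u ∨ head e = u) := fun h' =>
        he (mem_singleton.1 (h ▸ mem_filter.2 ⟨heF, h'⟩))
      obtain ⟨ht, hh⟩ := not_or.1 hne
      simp [incidence_apply, ht, hh]
    · exact mul_mem (hF e heF) (incidence_apply_mem_bot e u)
  have hsq : incidence tail head e₀ u * incidence tail head e₀ u = 1 := by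
    have : e₀ ∈ incidentEdges tail head F u := h ▸ mem_singleton_self e₀
    rcases (mem_filter.1 this).2 with rfl | rfl <;> simp [incidence_apply, hloop, hloop.symm]
  have h₀ : y e₀ * incidence tail head e₀ u ∈ (⊥ : Subring ℝ) := by
    rw [netOutflow_apply, ← add_sum_erase _ _ (mem_univ e₀)] at hu
    exact (add_mem_cancel_right (sum_mem fun e he => hinc e (ne_of_mem_erase he))).1 hu
  simpa [mul_assoc, hsq] using
    mul_mem h₀ (incidence_apply_mem_bot (tail := tail) (head := head) e₀ u)

lemma exists_circulation_of_notMem_bot {y : E → ℝ}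
    (hy : ∀ u, netOutflow tail head y u ∈ (⊥ : Subring ℝ))
    (hfrac : ∃ e, y e ∉ (⊥ : Subring ℝ)) :
    ∃ d ≠ 0, (∀ e, y e ∈ (⊥ : Subring ℝ) → d e = 0) ∧ netOutflow tail head d = 0 := by
  classical
  set F := univ.filter fun e => y e ∉ (⊥ : Subring ℝ)
  have hne : F.Nonempty := by
    obtain ⟨e, he⟩ := hfrac
    exact ⟨e, by simpa [F]⟩
  by_contra! h
  have hF : LinearIndepOn ℝ (incidence tail head) (F : Set E) := by
    rw [linearIndepOn_iff]
    intro l hl hl0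
    by_contra hl'
    refine h l (fun h0 => hl' (Finsupp.ext (congrFun h0))) (fun e he => ?_) ?_
    · by_contra hle
      simpa [F, he] using hl (Finsupp.mem_support_iff.2 hle)
    · rw [← hl0, Finsupp.linearCombination_apply, Finsupp.sum_fintype _ _ (by simp)]
      simp [netOutflow, Fintype.linearCombination_apply]
  obtain ⟨u, e₀, hu⟩ := exists_incidentEdges_eq_singleton hF hne
  have he₀ : e₀ ∈ F := (mem_filter.1 (hu ▸ mem_singleton_self e₀)).1
  exact (mem_filter.1 he₀).2 (mem_bot_of_incidentEdges_eq_singleton (hy u)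
    (fun e he => by simpa [F] using he) hu (tail_ne_head_of_incidence_ne_zero (hF.ne_zero he₀)))

variable (tail head) in
def IsFeasible (b : E → ℤ) (z : E → ℝ) : Prop :=
  ∀ u : V, ∑ e ∈ univ.filter (fun e => head e = u), (z e + (b e : ℝ)) =
    ∑ e ∈ univ.filter (fun e => tail e = u), z e

lemma isFeasible_iff {b : E → ℤ} {z : E → ℝ} :
    IsFeasible tail head b z ↔
      ∀ u, netOutflow tail head z u = ∑ e ∈ univ.filter (fun e => head e = u), (b e : ℝ) := by
  have h : ∀ u, netOutflow tail head z u =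
      ∑ e ∈ univ.filter (fun e => tail e = u), z e -
        ∑ e ∈ univ.filter (fun e => head e = u), z e := by
    simp [netOutflow_apply, incidence_apply, mul_sub, sum_sub_distrib, sum_filter]
  simp only [IsFeasible, h, sum_add_distrib]
  exact forall_congr' fun u => ⟨fun h => by linarith, fun h => by linarith⟩

lemma IsFeasible.add_circulation {b : E → ℤ} {z d : E → ℝ} (hz : IsFeasible tail head b z)
    (hd : netOutflow tail head d = 0) : IsFeasible tail head b (z + d) := by
  rw [isFeasible_iff] at hz ⊢
  simp [hz, hd]

lemma IsFeasible.netOutflow_mem_bot {b : E → ℤ} {z : E → ℝ} (hz : IsFeasible tail head b z)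
    (u : V) : netOutflow tail head z u ∈ (⊥ : Subring ℝ) := by
  rw [isFeasible_iff.1 hz u]
  exact sum_mem fun e _ => intCast_mem _ _

lemma isClosed_setOf_isFeasible (b : E → ℤ) : IsClosed {z | IsFeasible tail head b z} := by
  have : {z | IsFeasible tail head b z} =
      netOutflow tail head ⁻¹' {fun u => ∑ e ∈ univ.filter (fun e => head e = u), (b e : ℝ)} := by
    ext z
    simp [isFeasible_iff, funext_iff]
  rw [this]
  exact isClosed_singleton.preimage (netOutflow tail head).continuous_of_finiteDimensional

variable (C : E → ℝ → ℝ)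

def flowCost (z : E → ℝ) : ℝ := ∑ e, C e (z e)

def unitBox (n : E → ℤ) : Set (E → ℝ) := Set.univ.pi fun e => Set.Icc (n e : ℝ) (n e + 1)

variable {C}

lemma continuousOn_flowCost {S : E → Set ℝ} {α β : E → ℝ}
    (hC : ∀ e, ∀ x ∈ S e, C e x = α e + β e * x) :
    ContinuousOn (flowCost C) (Set.univ.pi S) :=
  continuousOn_finsetSum _ fun e _ =>
    ContinuousOn.congr (f := fun z : E → ℝ => α e + β e * z e) (by fun_prop)
      fun z hz => hC e _ (hz e trivial)

lemma flowCost_add_add_flowCost_sub {S : E → Set ℝ} {α β : E → ℝ}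
    (hC : ∀ e, ∀ x ∈ S e, C e x = α e + β e * x) {z v : E → ℝ} (hz : z ∈ Set.univ.pi S)
    (h₁ : z + v ∈ Set.univ.pi S) (h₂ : z - v ∈ Set.univ.pi S) :
    flowCost C (z + v) + flowCost C (z - v) = 2 * flowCost C z := by
  simp only [flowCost, ← sum_add_distrib, mul_sum]
  refine sum_congr rfl fun e _ => ?_
  rw [hC e _ (h₁ e trivial), hC e _ (h₂ e trivial), hC e _ (hz e trivial)]
  simp only [Pi.add_apply, Pi.sub_apply]
  ring

lemma isCompact_setOf_isFeasible_flowCost_le {b n : E → ℤ} {α β : E → ℝ}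
    (hC : ∀ e, ∀ x ∈ Set.Icc (n e : ℝ) (n e + 1), C e x = α e + β e * x) (m : ℝ) :
    IsCompact {z ∈ unitBox n | IsFeasible tail head b z ∧ flowCost C z ≤ m} := by
  have hclosed :=
    ((continuousOn_flowCost hC).mono Set.inter_subset_left).preimage_isClosed_of_isClosed
      ((isClosed_set_pi fun e _ => isClosed_Icc).inter
        (isClosed_setOf_isFeasible (tail := tail) (head := head) b)) (isClosed_Iic (a := m))
  refine (isCompact_univ_pi fun e => isCompact_Icc).of_isClosed_subset ?_ fun z hz => hz.1
  convert hclosed using 1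
  ext z
  exact and_assoc.symm

lemma mem_bot_of_mem_extremePoints {b n : E → ℤ} {α β : E → ℝ}
    (hC : ∀ e, ∀ x ∈ Set.Icc (n e : ℝ) (n e + 1), C e x = α e + β e * x) {m : ℝ}
    (hopt : ∀ z, IsFeasible tail head b z → m ≤ flowCost C z) {z : E → ℝ}
    (hz : z ∈ {z ∈ unitBox n | IsFeasible tail head b z ∧ flowCost C z ≤ m}.extremePoints ℝ)
    (e : E) : z e ∈ (⊥ : Subring ℝ) := by
  obtain ⟨hbox, hfeas, hcost⟩ := hz.1
  by_contra he
  obtain ⟨d, hd0, hdint, hdcirc⟩ :=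
    exists_circulation_of_notMem_bot hfeas.netOutflow_mem_bot ⟨e, he⟩
  obtain ⟨t, ht, h₁, h₂⟩ := exists_pos_add_smul_mem_pi_Icc (fun e => hbox e trivial)
    fun e hde => mem_Ioo_of_mem_Icc_of_notMem_bot (hbox e trivial) fun h => hde (hdint e h)
  have hcirc : netOutflow tail head (t • d) = 0 := by rw [map_smul, hdcirc, smul_zero]
  have hfeas₁ := hfeas.add_circulation hcirc
  have hfeas₂ : IsFeasible tail head b (z - t • d) := by
    rw [sub_eq_add_neg]
    exact hfeas.add_circulation (by rw [map_neg, hcirc, neg_zero])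
  have hsum := flowCost_add_add_flowCost_sub hC hbox h₁ h₂
  have hopt₁ := hopt _ hfeas₁
  have hopt₂ := hopt _ hfeas₂
  have htd := eq_zero_of_add_mem_of_sub_mem_of_mem_extremePoints hz
    ⟨h₁, hfeas₁, by linarith⟩ ⟨h₂, hfeas₂, by linarith⟩
  exact hd0 ((smul_eq_zero.1 htd).resolve_left ht.ne')

end FlowNetwork

theorem convex_cost_flow_integer_optimal_general
    {V E : Type*} [Fintype E] [DecidableEq V]
    (tail head : E → V) (b : E → ℤ) (C : E → ℝ → ℝ)
    (haff : ∀ e : E, ∀ n : ℤ, ∃ α β : ℝ,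
      ∀ z ∈ Set.Icc (n : ℝ) ((n : ℝ) + 1), C e z = α + β * z)
    (zstar : E → ℝ)
    (hfeas : ∀ u : V,
      ∑ e ∈ univ.filter (fun e => head e = u), (zstar e + (b e : ℝ)) =
        ∑ e ∈ univ.filter (fun e => tail e = u), zstar e)
    (hopt : ∀ z : E → ℝ,
      (∀ u : V,
        ∑ e ∈ univ.filter (fun e => head e = u), (z e + (b e : ℝ)) =
          ∑ e ∈ univ.filter (fun e => tail e = u), z e) →
      ∑ e, C e (zstar e) ≤ ∑ e, C e (z e)) :
    ∃ z' : E → ℝ,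
      (∀ u : V,
        ∑ e ∈ univ.filter (fun e => head e = u), (z' e + (b e : ℝ)) =
          ∑ e ∈ univ.filter (fun e => tail e = u), z' e) ∧
      (∀ e : E, ∃ n : ℤ, z' e = (n : ℝ)) ∧
      ∑ e, C e (z' e) = ∑ e, C e (zstar e) := by
  open FlowNetwork in
  choose α β hC using fun e => haff e ⌊zstar e⌋
  obtain ⟨z, hz⟩ := (isCompact_setOf_isFeasible_flowCost_le (tail := tail) (head := head) (b := b)
    hC (flowCost C zstar)).extremePoints_nonempty
      ⟨zstar, fun e _ => ⟨Int.floor_le _, (Int.lt_floor_add_one _).le⟩, hfeas, le_rfl⟩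
  obtain ⟨-, hzfeas, hzcost⟩ := hz.1
  refine ⟨z, hzfeas, fun e => ?_, le_antisymm hzcost (hopt z hzfeas)⟩
  obtain ⟨k, hk⟩ := Subring.mem_bot.1 (mem_bot_of_mem_extremePoints hC hopt hz e)
  exact ⟨k, hk.symm⟩

/-- A minimum convex cost flow problem whose edge costs are convex and affine on every
integer interval has an integer optimal solution: any optimal feasible flow can be
replaced by an integer-valued feasible flow of the same total cost. -/
theorem convex_cost_flow_integer_optimal
    {V E : Type*} [Fintype V] [Fintype E] [DecidableEq V]
    (tail head : E → V) (b : E → ℤ) (C : E → ℝ → ℝ)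
    (hconv : ∀ e : E, ConvexOn ℝ Set.univ (C e))
    (haff : ∀ e : E, ∀ n : ℤ, ∃ α β : ℝ,
      ∀ z ∈ Set.Icc (n : ℝ) ((n : ℝ) + 1), C e z = α + β * z)
    (zstar : E → ℝ)
    (hfeas : ∀ u : V,
      ∑ e ∈ univ.filter (fun e => head e = u), (zstar e + (b e : ℝ)) =
        ∑ e ∈ univ.filter (fun e => tail e = u), zstar e)
    (hopt : ∀ z : E → ℝ,
      (∀ u : V,
        ∑ e ∈ univ.filter (fun e => head e = u), (z e + (b e : ℝ)) =
          ∑ e ∈ univ.filter (fun e => tail e = u), z e) →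
      ∑ e, C e (zstar e) ≤ ∑ e, C e (z e)) :
    ∃ z' : E → ℝ,
      (∀ u : V,
        ∑ e ∈ univ.filter (fun e => head e = u), (z' e + (b e : ℝ)) =
          ∑ e ∈ univ.filter (fun e => tail e = u), z' e) ∧
      (∀ e : E, ∃ n : ℤ, z' e = (n : ℝ)) ∧
      ∑ e, C e (z' e) = ∑ e, C e (zstar e) :=
  convex_cost_flow_integer_optimal_general tail head b C haff zstar hfeas hopt
end
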